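/- arXiv:1311.6028 — 5 statements merged into one kernel-verified Lean document; each statement's English description precedes it below -/
import Mathlib

section
/- For any unit vector n ∈ ℝ³ and l ∈ ℕ, contracting one index of the STF tensor n̂_{iL} of rank l+1 with n_i gives n_i n̂_{iL} = ((l+1)/(2l+1)) · n̂_L. -/
open scoped Nat

/-- A rank-`l` Cartesian tensor on ℝ³, given by its components. -/
abbrev Tensor (l : ℕ) := (Fin l → Fin 3) → ℝ

/-- The natural inner product of two rank-`l` tensors (full contraction). -/
noncomputable def tInner {l : ℕ} (S T : Tensor l) : ℝ :=
  ∑ I : Fin l → Fin 3, S I * T I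

/-- A tensor is symmetric if invariant under all index permutations. -/
def IsSym {l : ℕ} (T : Tensor l) : Prop :=
  ∀ (σ : Equiv.Perm (Fin l)) (I : Fin l → Fin 3), T (I ∘ σ) = T I

/-- A tensor is trace-free if the contraction of any pair of distinct indices
vanishes. -/
def IsTraceFree {l : ℕ} (T : Tensor l) : Prop :=
  ∀ p q : Fin l, p ≠ q → ∀ I : Fin l → Fin 3,
    ∑ a : Fin 3, T (Function.update (Function.update I p a) q a) = 0

/-- Symmetric and trace-free. -/
def IsSTF {l : ℕ} (T : Tensor l) : Prop := IsSym T ∧ IsTraceFree T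

/-- `That` is the symmetric trace-free part of `T`: it is STF and `T − That`
is orthogonal to every STF tensor (i.e. `That` is the orthogonal projection of
`T` onto the subspace of STF tensors). -/
def IsSTFPartOf {l : ℕ} (That T : Tensor l) : Prop :=
  IsSTF That ∧ ∀ S : Tensor l, IsSTF S → tInner (T - That) S = 0

/-- The `l`-fold tensor product of a vector with itself. -/
def vecPow (n : Fin 3 → ℝ) (l : ℕ) : Tensor l := fun I => ∏ j, n (I j)

/-! ### auxiliary machinery -/

def cnt {r : ℕ} (A : Fin r → Fin 3) (v : Fin 3) : ℕ := ∑ i, if A i = v then 1 else 0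

lemma cnt_cons {r : ℕ} (a : Fin 3) (A : Fin r → Fin 3) (v : Fin 3) :
    cnt (Fin.cons a A) v = (if a = v then 1 else 0) + cnt A v := by
  simp only [cnt, Fin.sum_univ_succ, Fin.cons_zero, Fin.cons_succ]

lemma sym_eq_of_cnt {r : ℕ} {U : Tensor r} (hU : IsSym U) {A B : Fin r → Fin 3}
    (h : ∀ v, cnt A v = cnt B v) : U A = U B := by
  have hcard : ∀ v : Fin 3, Fintype.card {i // A i = v} = Fintype.card {i // B i = v} := by
    intro v
    have hv := h v
    rw [Fintype.card_subtype, Fintype.card_subtype, Finset.card_filter, Finset.card_filter]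
    exact hv
  let e : ∀ v : Fin 3, {i // A i = v} ≃ {i // B i = v} := fun v => Fintype.equivOfCardEq (hcard v)
  have hσ : ∀ i, B (Equiv.ofFiberEquiv e i) = A i := fun i => Equiv.ofFiberEquiv_map e i
  have hAB : A = B ∘ ⇑(Equiv.ofFiberEquiv e) := funext fun i => (hσ i).symm
  rw [hAB]
  exact hU _ B

lemma exists_perm_comp {r N : ℕ} {f g : Fin r → Fin N} (hf : Function.Injective f)
    (hg : Function.Injective g) (h : Set.range f = Set.range g) :
    ∃ σ : Equiv.Perm (Fin r), ∀ i, g (σ i) = f i := by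
  refine ⟨(Equiv.ofInjective f hf).trans ((Equiv.setCongr h).trans
    (Equiv.ofInjective g hg).symm), fun i => ?_⟩
  simp only [Equiv.trans_apply]
  rw [Equiv.apply_ofInjective_symm hg]
  rfl

lemma sym_comp_eq {r N : ℕ} {U : Tensor r} (hU : IsSym U) {J : Fin N → Fin 3}
    {f g : Fin r → Fin N} (hf : Function.Injective f) (hg : Function.Injective g)
    (h : Set.range f = Set.range g) : U (fun i => J (f i)) = U (fun i => J (g i)) := by
  obtain ⟨σ, hσ⟩ := exists_perm_comp hf hg h
  have he : (fun i => J (f i)) = (fun i => J (g i)) ∘ ⇑σ := by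
    funext i
    simp [Function.comp, hσ i]
  rw [he]
  exact hU σ _

lemma sum_split_one {r : ℕ} {M : Type*} [AddCommMonoid M] {k : Fin (r+1)}
    {f : Fin r → Fin (r+1)} (hf : Function.Injective f)
    (hr : ∀ x, x ∈ Set.range f ↔ x ≠ k) (g : Fin (r+1) → M) :
    ∑ x, g x = g k + ∑ i, g (f i) := by
  have hk : k ∉ Finset.univ.image f := by
    simp only [Finset.mem_image, Finset.mem_univ, true_and]
    rintro ⟨i, hi⟩
    exact ((hr k).1 ⟨i, hi⟩) rfl
  have huniv : (Finset.univ : Finset (Fin (r+1))) = insert k (Finset.univ.image f) := by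
    ext x
    simp only [Finset.mem_univ, true_iff, Finset.mem_insert, Finset.mem_image, true_and]
    rcases eq_or_ne x k with h' | h'
    · exact Or.inl h'
    · exact Or.inr ((hr x).2 h')
  rw [huniv, Finset.sum_insert hk, Finset.sum_image (fun i _ j _ h' => hf h')]

lemma sum_split_two {r : ℕ} {M : Type*} [AddCommMonoid M] {p q : Fin (r+2)} (hpq : p ≠ q)
    {f : Fin r → Fin (r+2)} (hf : Function.Injective f)
    (hr : ∀ x, x ∈ Set.range f ↔ (x ≠ p ∧ x ≠ q)) (g : Fin (r+2) → M) :
    ∑ x, g x = g p + g q + ∑ i, g (f i) := by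
  have hq : q ∉ Finset.univ.image f := by
    simp only [Finset.mem_image, Finset.mem_univ, true_and]
    rintro ⟨i, hi⟩
    exact ((hr q).1 ⟨i, hi⟩).2 rfl
  have hp : p ∉ insert q (Finset.univ.image f) := by
    simp only [Finset.mem_insert, Finset.mem_image, Finset.mem_univ, true_and]
    rintro (h' | ⟨i, hi⟩)
    · exact hpq h'
    · exact ((hr p).1 ⟨i, hi⟩).1 rfl
  have huniv : (Finset.univ : Finset (Fin (r+2))) = insert p (insert q (Finset.univ.image f)) := by
    ext x
    simp only [Finset.mem_univ, true_iff, Finset.mem_insert, Finset.mem_image, true_and]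
    rcases eq_or_ne x p with h' | h'
    · exact Or.inl h'
    rcases eq_or_ne x q with h'' | h''
    · exact Or.inr (Or.inl h'')
    · exact Or.inr (Or.inr ((hr x).2 ⟨h', h''⟩))
  rw [huniv, Finset.sum_insert hp, Finset.sum_insert hq,
    Finset.sum_image (fun i _ j _ h' => hf h'), add_assoc]



lemma fin_zero_ne_one {m : ℕ} : (0 : Fin (m+2)) ≠ 1 := by
  simp [Fin.ext_iff]

def pqPerm {m : ℕ} (p q : Fin (m+2)) : Equiv.Perm (Fin (m+2)) :=
  (Equiv.swap 1 (Equiv.swap 0 p q)).trans (Equiv.swap 0 p)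

lemma pqPerm_zero {m : ℕ} {p q : Fin (m+2)} (h : p ≠ q) : pqPerm p q 0 = p := by
  have hq' : Equiv.swap 0 p q ≠ 0 := by
    intro hc
    have h2 := congrArg (Equiv.swap 0 p) hc
    rw [Equiv.swap_apply_self, Equiv.swap_apply_left] at h2
    exact h h2.symm
  unfold pqPerm
  rw [Equiv.trans_apply, Equiv.swap_apply_of_ne_of_ne fin_zero_ne_one (Ne.symm hq'),
    Equiv.swap_apply_left]

lemma pqPerm_one {m : ℕ} {p q : Fin (m+2)} (h : p ≠ q) : pqPerm p q 1 = q := by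
  unfold pqPerm
  rw [Equiv.trans_apply, Equiv.swap_apply_left, Equiv.swap_apply_self]

def eMap {m : ℕ} (p q : Fin (m+2)) : Fin m → Fin (m+2) := fun j => pqPerm p q j.succ.succ

lemma succ_succ_exists {m : ℕ} (y : Fin (m+2)) (h0 : y ≠ 0) (h1 : y ≠ 1) :
    ∃ j : Fin m, j.succ.succ = y := by
  cases y using Fin.cases with
  | zero => exact absurd rfl h0
  | succ w =>
    cases w using Fin.cases with
    | zero => exact absurd Fin.succ_zero_eq_one h1
    | succ z => exact ⟨z, rfl⟩

lemma eMap_injective {m : ℕ} (p q : Fin (m+2)) : Function.Injective (eMap p q) := by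
  intro i j hij
  have h := (pqPerm p q).injective hij
  exact Fin.succ_injective _ (Fin.succ_injective _ h)

lemma range_eMap {m : ℕ} {p q : Fin (m+2)} (h : p ≠ q) :
    ∀ x, x ∈ Set.range (eMap p q) ↔ (x ≠ p ∧ x ≠ q) := by
  intro x
  constructor
  · rintro ⟨j, rfl⟩
    constructor
    · intro hc
      exact Fin.succ_ne_zero _ ((pqPerm p q).injective (hc.trans (pqPerm_zero h).symm))
    · intro hc
      have h2 := (pqPerm p q).injective (hc.trans (pqPerm_one h).symm)
      rw [← Fin.succ_zero_eq_one] at h2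
      exact Fin.succ_ne_zero _ (Fin.succ_injective _ h2)
  · rintro ⟨hp, hq⟩
    set y := (pqPerm p q).symm x with hy
    have hx : pqPerm p q y = x := Equiv.apply_symm_apply _ _
    have h0 : y ≠ 0 := by
      intro hc
      rw [hc, pqPerm_zero h] at hx
      exact hp hx.symm
    have h1 : y ≠ 1 := by
      intro hc
      rw [hc, pqPerm_one h] at hx
      exact hq hx.symm
    obtain ⟨j, hj⟩ := succ_succ_exists _ h0 h1
    refine ⟨j, ?_⟩
    show pqPerm p q j.succ.succ = x
    rw [hj, hx]

lemma range_eMap_set {m : ℕ} {p q : Fin (m+2)} (h : p ≠ q) :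
    Set.range (eMap p q) = ({p, q} : Set (Fin (m+2)))ᶜ := by
  ext x
  simp only [Set.mem_compl_iff, Set.mem_insert_iff, Set.mem_singleton_iff, not_or]
  exact range_eMap h x



noncomputable def contr {r : ℕ} (n : Fin 3 → ℝ) (T : Tensor (r+1)) : Tensor r :=
  fun I => ∑ a, n a * T (Fin.cons a I)

lemma isSym_contr {r : ℕ} {n : Fin 3 → ℝ} {T : Tensor (r+1)} (hT : IsSym T) :
    IsSym (contr n T) := by
  intro σ I
  unfold contr
  refine Finset.sum_congr rfl fun a _ => ?_
  congr 1
  have hcons : Fin.cons a (I ∘ ⇑σ) = (Fin.cons a I) ∘ ⇑(Equiv.Perm.decomposeFin.symm (0, σ)) := by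
    funext x
    cases x using Fin.cases with
    | zero => simp
    | succ i => simp [Equiv.Perm.decomposeFin_symm_apply_succ, Equiv.swap_self]
  rw [hcons]
  exact hT _ _

lemma isTraceFree_contr {r : ℕ} {n : Fin 3 → ℝ} {T : Tensor (r+1)} (hT : IsTraceFree T) :
    IsTraceFree (contr n T) := by
  intro p q hpq I
  unfold contr
  rw [Finset.sum_comm]
  refine Finset.sum_eq_zero fun a _ => ?_
  have key : ∀ b : Fin 3, Fin.cons a (Function.update (Function.update I p b) q b)
      = Function.update (Function.update (Fin.cons a I : Fin (r+1) → Fin 3) p.succ b) q.succ b := by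
    intro b
    rw [Fin.cons_update, Fin.cons_update]
  calc ∑ b, n a * T (Fin.cons a (Function.update (Function.update I p b) q b))
      = n a * ∑ b, T (Function.update (Function.update (Fin.cons a I : Fin (r+1) → Fin 3) p.succ b) q.succ b) := by
        rw [Finset.mul_sum]
        exact Finset.sum_congr rfl fun b _ => by rw [key b]
    _ = 0 := by
        rw [hT p.succ q.succ (fun hc => hpq (Fin.succ_injective _ hc)) (Fin.cons a I), mul_zero]

lemma trace_cons {r : ℕ} {T : Tensor (r+2)} (hT : IsTraceFree T) (K : Fin r → Fin 3) :
    ∑ a, T (Fin.cons a (Fin.cons a K)) = 0 := by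
  have h := hT 0 1 fin_zero_ne_one (Fin.cons 0 (Fin.cons 0 K) : Fin (r+2) → Fin 3)
  have e : ∀ a : Fin 3, Function.update (Function.update (Fin.cons 0 (Fin.cons 0 K) : Fin (r+2) → Fin 3) 0 a) 1 a
      = Fin.cons a (Fin.cons a K) := by
    intro a
    rw [Fin.update_cons_zero, show (1 : Fin (r+2)) = Fin.succ 0 from Fin.succ_zero_eq_one.symm,
      ← Fin.cons_update, Fin.update_cons_zero]
  calc ∑ a, T (Fin.cons a (Fin.cons a K))
      = ∑ a, T (Function.update (Function.update (Fin.cons 0 (Fin.cons 0 K) : Fin (r+2) → Fin 3) 0 a) 1 a) :=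
        Finset.sum_congr rfl fun a _ => by rw [e a]
    _ = 0 := h

lemma isTraceFree_of_sym_trace {r : ℕ} {T : Tensor (r+2)} (hsym : IsSym T)
    (h : ∀ K : Fin r → Fin 3, ∑ a, T (Fin.cons a (Fin.cons a K)) = 0) : IsTraceFree T := by
  intro p q hpq I
  have key : ∀ a : Fin 3, (Function.update (Function.update I p a) q a) ∘ ⇑(pqPerm p q)
      = Fin.cons a (Fin.cons a (fun j => I (pqPerm p q j.succ.succ))) := by
    intro a
    funext x
    cases x using Fin.cases with
    | zero =>
      simp only [Function.comp_apply, Fin.cons_zero]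
      rw [pqPerm_zero hpq, Function.update_of_ne hpq, Function.update_self]
    | succ w =>
      cases w using Fin.cases with
      | zero =>
        simp only [Function.comp_apply, Fin.cons_succ, Fin.cons_zero]
        rw [Fin.succ_zero_eq_one, pqPerm_one hpq, Function.update_self]
      | succ z =>
        simp only [Function.comp_apply, Fin.cons_succ]
        have hne_p : pqPerm p q z.succ.succ ≠ p := by
          intro hc
          exact Fin.succ_ne_zero _ ((pqPerm p q).injective (hc.trans (pqPerm_zero hpq).symm))
        have hne_q : pqPerm p q z.succ.succ ≠ q := by
          intro hc
          have h2 := (pqPerm p q).injective (hc.trans (pqPerm_one hpq).symm)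
          rw [← Fin.succ_zero_eq_one] at h2
          exact Fin.succ_ne_zero _ (Fin.succ_injective _ h2)
        rw [Function.update_of_ne hne_q, Function.update_of_ne hne_p]
  calc ∑ a, T (Function.update (Function.update I p a) q a)
      = ∑ a, T ((Function.update (Function.update I p a) q a) ∘ ⇑(pqPerm p q)) :=
        Finset.sum_congr rfl fun a _ => (hsym (pqPerm p q) _).symm
    _ = ∑ a, T (Fin.cons a (Fin.cons a (fun j => I (pqPerm p q j.succ.succ)))) :=
        Finset.sum_congr rfl fun a _ => by rw [key a]
    _ = 0 := h _

lemma isSym_vecPow (n : Fin 3 → ℝ) (r : ℕ) : IsSym (vecPow n r) := by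
  intro σ I
  unfold vecPow
  exact Equiv.prod_comp σ fun j => n (I j)

lemma vecPow_cons {r : ℕ} (n : Fin 3 → ℝ) (a : Fin 3) (I : Fin r → Fin 3) :
    vecPow n (r+1) (Fin.cons a I) = n a * vecPow n r I := by
  unfold vecPow
  rw [Fin.prod_univ_succ]
  simp

lemma contr_vecPow {r : ℕ} (n : Fin 3 → ℝ) (hn : ∑ i, n i ^ 2 = 1) :
    contr n (vecPow n (r+1)) = vecPow n r := by
  funext I
  unfold contr
  calc ∑ a, n a * vecPow n (r+1) (Fin.cons a I) = ∑ a, n a ^ 2 * vecPow n r I := by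
        refine Finset.sum_congr rfl fun a _ => ?_
        rw [vecPow_cons]
        ring
    _ = vecPow n r I := by rw [← Finset.sum_mul, hn, one_mul]

/-! layer 4 : sum reindexing and tInner helpers -/

lemma sum_pi_succ {r : ℕ} {M : Type*} [AddCommMonoid M] (F : (Fin (r+1) → Fin 3) → M) :
    ∑ J, F J = ∑ a : Fin 3, ∑ I : Fin r → Fin 3, F (Fin.cons a I) := by
  rw [← Equiv.sum_comp (Fin.consEquiv fun _ => Fin 3) F, Fintype.sum_prod_type]
  rfl

lemma tInner_comp_perm {r : ℕ} {T : Tensor r} (hT : IsSym T) (V : Tensor r)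
    (σ : Equiv.Perm (Fin r)) :
    tInner T (fun J => V (J ∘ ⇑σ)) = tInner T V := by
  unfold tInner
  rw [← Equiv.sum_comp (Equiv.arrowCongr σ (Equiv.refl (Fin 3)))
    (fun J => T J * V (J ∘ ⇑σ))]
  refine Finset.sum_congr rfl fun K _ => ?_
  have h1 : (Equiv.arrowCongr σ (Equiv.refl (Fin 3))) K = K ∘ ⇑σ.symm := by
    funext x
    simp [Equiv.arrowCongr]
  rw [h1]
  have h2 : (K ∘ ⇑σ.symm) ∘ ⇑σ = K := by funext x; simp
  rw [h2, hT σ.symm K]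

lemma tInner_sub_smul_right {r : ℕ} (T A B : Tensor r) (c : ℝ) :
    tInner T (fun J => A J - c * B J) = tInner T A - c * tInner T B := by
  unfold tInner
  rw [Finset.mul_sum, ← Finset.sum_sub_distrib]
  refine Finset.sum_congr rfl fun J _ => by ring

lemma tInner_sub_smul_left {r : ℕ} (T A B : Tensor r) (c : ℝ) :
    tInner (fun J => A J - c * B J) T = tInner A T - c * tInner B T := by
  unfold tInner
  rw [Finset.mul_sum, ← Finset.sum_sub_distrib]
  refine Finset.sum_congr rfl fun J _ => by ring

lemma tInner_pi_sub_left {r : ℕ} (A B T : Tensor r) :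
    tInner (A - B) T = tInner A T - tInner B T := by
  unfold tInner
  rw [← Finset.sum_sub_distrib]
  refine Finset.sum_congr rfl fun J _ => by
    simp [Pi.sub_apply]
    ring

/-! layer 5 : tuple evaluation helpers -/

lemma cons2_zero {r : ℕ} (a b : Fin 3) (K : Fin r → Fin 3) :
    (Fin.cons a (Fin.cons b K) : Fin (r+2) → Fin 3) 0 = a := rfl

lemma cons2_one {r : ℕ} (a b : Fin 3) (K : Fin r → Fin 3) :
    (Fin.cons a (Fin.cons b K) : Fin (r+2) → Fin 3) 1 = b := by
  rw [show (1 : Fin (r+2)) = Fin.succ 0 from Fin.succ_zero_eq_one.symm, Fin.cons_succ,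
    Fin.cons_zero]

lemma cons2_ss {r : ℕ} (a b : Fin 3) (K : Fin r → Fin 3) (j : Fin r) :
    (Fin.cons a (Fin.cons b K) : Fin (r+2) → Fin 3) j.succ.succ = K j := by
  rw [Fin.cons_succ, Fin.cons_succ]

lemma cons_cons_eq_of_ne {r : ℕ} (a b : Fin 3) (K : Fin r → Fin 3) (y : Fin (r+2))
    (h0 : y ≠ 0) (h1 : y ≠ 1) :
    (Fin.cons a (Fin.cons a K) : Fin (r+2) → Fin 3) y
      = (Fin.cons b (Fin.cons b K) : Fin (r+2) → Fin 3) y := by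
  cases y using Fin.cases with
  | zero => exact absurd rfl h0
  | succ w =>
    cases w using Fin.cases with
    | zero => exact absurd Fin.succ_zero_eq_one h1
    | succ z => rw [cons2_ss, cons2_ss]

lemma trace_aux {s r : ℕ} {V : Tensor s} (hV : IsTraceFree V)
    (e : Fin s → Fin (r+2)) (he : Function.Injective e)
    {s0 t0 : Fin s} (h0 : e s0 = 0) (h1 : e t0 = 1) (K : Fin r → Fin 3) :
    ∑ a, V (fun i => (Fin.cons a (Fin.cons a K) : Fin (r+2) → Fin 3) (e i)) = 0 := by
  have hst : s0 ≠ t0 := by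
    intro hc
    rw [hc, h1] at h0
    exact fin_zero_ne_one h0.symm
  have key : ∀ a : Fin 3, (fun i => (Fin.cons a (Fin.cons a K) : Fin (r+2) → Fin 3) (e i))
      = Function.update (Function.update
          (fun i => (Fin.cons 0 (Fin.cons 0 K) : Fin (r+2) → Fin 3) (e i)) s0 a) t0 a := by
    intro a
    funext i
    rcases eq_or_ne i t0 with rfl | hit
    · rw [Function.update_self, h1, cons2_one]
    · rw [Function.update_of_ne hit]
      rcases eq_or_ne i s0 with rfl | his
      · rw [Function.update_self, h0, cons2_zero]
      · rw [Function.update_of_ne his]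
        exact cons_cons_eq_of_ne a 0 K (e i)
          (fun hc => his (he (by rw [hc, h0])))
          (fun hc => hit (he (by rw [hc, h1])))
  calc ∑ a, V (fun i => (Fin.cons a (Fin.cons a K) : Fin (r+2) → Fin 3) (e i))
      = ∑ a, V (Function.update (Function.update
          (fun i => (Fin.cons 0 (Fin.cons 0 K) : Fin (r+2) → Fin 3) (e i)) s0 a) t0 a) :=
        Finset.sum_congr rfl fun a _ => by rw [key a]
    _ = 0 := hV s0 t0 hst _

lemma cnt_eMap {m : ℕ} {p q : Fin (m+2)} (hpq : p ≠ q) (J : Fin (m+2) → Fin 3) (v : Fin 3) :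
    cnt J v = (if J p = v then 1 else 0) + (if J q = v then 1 else 0)
      + cnt (fun j => J (eMap p q j)) v := by
  unfold cnt
  exact sum_split_two hpq (eMap_injective p q) (range_eMap hpq) _

/-! layer 6 : the tensor Wt1 -/

noncomputable def Wt1 {m : ℕ} (n : Fin 3 → ℝ) (U : Tensor (m+1)) : Tensor (m+2) :=
  fun J => ∑ k, n (J k) * U (fun i => J (k.succAbove i))

lemma isSym_Wt1 {m : ℕ} (n : Fin 3 → ℝ) {U : Tensor (m+1)} (hU : IsSym U) :
    IsSym (Wt1 n U) := by
  intro σ J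
  unfold Wt1
  rw [← Equiv.sum_comp σ (fun k => n (J k) * U (fun i => J (k.succAbove i)))]
  refine Finset.sum_congr rfl fun k _ => ?_
  simp only [Function.comp_apply]
  congr 1
  refine sym_comp_eq hU (f := fun i => σ (k.succAbove i)) (g := (σ k).succAbove)
    (fun i j h => Fin.succAbove_right_injective (σ.injective h))
    Fin.succAbove_right_injective ?_
  have hc : (fun i => σ (k.succAbove i)) = ⇑σ ∘ k.succAbove := rfl
  rw [hc, Set.range_comp, Fin.range_succAbove, Fin.range_succAbove,
    Set.image_compl_eq σ.bijective, Set.image_singleton]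

lemma Fcomp0 {m : ℕ} (a : Fin 3) (K : Fin m → Fin 3) :
    (fun i : Fin (m+1) => (Fin.cons a (Fin.cons a K) : Fin (m+2) → Fin 3)
      ((0 : Fin (m+2)).succAbove i)) = Fin.cons a K := by
  funext i
  rw [Fin.zero_succAbove, Fin.cons_succ]

lemma Fcomp1 {m : ℕ} (a : Fin 3) (K : Fin m → Fin 3) :
    (fun i : Fin (m+1) => (Fin.cons a (Fin.cons a K) : Fin (m+2) → Fin 3)
      ((1 : Fin (m+2)).succAbove i)) = Fin.cons a K := by
  have h1 : (1 : Fin (m+2)) = (0 : Fin (m+1)).succ := Fin.succ_zero_eq_one.symm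
  funext i
  cases i using Fin.cases with
  | zero => rw [h1, Fin.succ_succAbove_zero, cons2_zero, Fin.cons_zero]
  | succ y => rw [h1, Fin.succ_succAbove_succ, Fin.zero_succAbove, cons2_ss, Fin.cons_succ]

lemma trace_Wt1 {m : ℕ} (n : Fin 3 → ℝ) {U : Tensor (m+1)} (hUtf : IsTraceFree U)
    (K : Fin m → Fin 3) :
    ∑ a, Wt1 n U (Fin.cons a (Fin.cons a K)) = 2 * contr n U K := by
  unfold Wt1
  have expand : ∀ a : Fin 3,
      (∑ k : Fin (m+2), n ((Fin.cons a (Fin.cons a K) : Fin (m+2) → Fin 3) k)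
        * U (fun i => (Fin.cons a (Fin.cons a K) : Fin (m+2) → Fin 3) (k.succAbove i)))
      = n a * U (Fin.cons a K) + (n a * U (Fin.cons a K)
        + ∑ j : Fin m, n (K j) * U (fun i =>
            (Fin.cons a (Fin.cons a K) : Fin (m+2) → Fin 3) ((j.succ.succ).succAbove i))) := by
    intro a
    rw [Fin.sum_univ_succ, Fin.sum_univ_succ]
    simp only [Fin.succ_zero_eq_one, cons2_zero, cons2_one, cons2_ss, Fcomp0, Fcomp1]
  calc ∑ a, (∑ k : Fin (m+2), n ((Fin.cons a (Fin.cons a K) : Fin (m+2) → Fin 3) k)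
        * U (fun i => (Fin.cons a (Fin.cons a K) : Fin (m+2) → Fin 3) (k.succAbove i)))
      = ∑ a, (n a * U (Fin.cons a K) + (n a * U (Fin.cons a K)
        + ∑ j : Fin m, n (K j) * U (fun i =>
            (Fin.cons a (Fin.cons a K) : Fin (m+2) → Fin 3) ((j.succ.succ).succAbove i)))) :=
        Finset.sum_congr rfl fun a _ => expand a
    _ = (∑ a, n a * U (Fin.cons a K)) + ((∑ a, n a * U (Fin.cons a K))
        + ∑ a, ∑ j : Fin m, n (K j) * U (fun i =>
            (Fin.cons a (Fin.cons a K) : Fin (m+2) → Fin 3) ((j.succ.succ).succAbove i))) := by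
        rw [Finset.sum_add_distrib, Finset.sum_add_distrib]
    _ = 2 * contr n U K := by
        have hz : ∑ a, ∑ j : Fin m, n (K j) * U (fun i =>
            (Fin.cons a (Fin.cons a K) : Fin (m+2) → Fin 3) ((j.succ.succ).succAbove i)) = 0 := by
          rw [Finset.sum_comm]
          refine Finset.sum_eq_zero fun j _ => ?_
          have hk0 : (j.succ.succ : Fin (m+2)) ≠ 0 := Fin.succ_ne_zero _
          have hk1 : (j.succ.succ : Fin (m+2)) ≠ 1 := by
            rw [← Fin.succ_zero_eq_one]
            exact fun hc => Fin.succ_ne_zero _ (Fin.succ_injective _ hc)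
          obtain ⟨s0, hs0⟩ : ∃ s0, (j.succ.succ : Fin (m+2)).succAbove s0 = 0 := by
            have h : (0 : Fin (m+2)) ∈ Set.range (Fin.succAbove j.succ.succ) := by
              rw [Fin.range_succAbove]
              exact Ne.symm hk0
            exact h
          obtain ⟨t0, ht0⟩ : ∃ t0, (j.succ.succ : Fin (m+2)).succAbove t0 = 1 := by
            have h : (1 : Fin (m+2)) ∈ Set.range (Fin.succAbove j.succ.succ) := by
              rw [Fin.range_succAbove]
              exact Ne.symm hk1
            exact h
          rw [← Finset.mul_sum]
          rw [trace_aux hUtf _ Fin.succAbove_right_injective hs0 ht0 K, mul_zero]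
        rw [hz, add_zero]
        have : contr n U K = ∑ a, n a * U (Fin.cons a K) := rfl
        rw [this]
        ring

/-! layer 7 : the tensor Dt1 -/

noncomputable def Dt1 {m : ℕ} (V' : Tensor m) : Tensor (m+2) :=
  fun J => ∑ p, ∑ q, if p ≠ q ∧ J p = J q then V' (fun j => J (eMap p q j)) else 0

lemma isSym_Dt1 {m : ℕ} {V' : Tensor m} (hV : IsSym V') : IsSym (Dt1 V') := by
  intro σ J
  unfold Dt1
  have step : ∀ p q : Fin (m+2),
      (if p ≠ q ∧ (J ∘ ⇑σ) p = (J ∘ ⇑σ) q then V' (fun j => (J ∘ ⇑σ) (eMap p q j)) else 0)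
      = (if σ p ≠ σ q ∧ J (σ p) = J (σ q) then V' (fun j => J (eMap (σ p) (σ q) j)) else 0) := by
    intro p q
    simp only [Function.comp_apply]
    by_cases hpq : p = q
    · subst hpq
      simp
    · have hσpq : σ p ≠ σ q := fun hc => hpq (σ.injective hc)
      have hcond : (p ≠ q ∧ J (σ p) = J (σ q)) ↔ (σ p ≠ σ q ∧ J (σ p) = J (σ q)) := by
        simp [hpq, hσpq]
      have hval : V' (fun j => J (σ (eMap p q j))) = V' (fun j => J (eMap (σ p) (σ q) j)) := by
        refine sym_comp_eq hV (fun i j h => eMap_injective p q (σ.injective h))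
          (eMap_injective _ _) ?_
        ext x
        constructor
        · rintro ⟨j, rfl⟩
          obtain ⟨h1, h2⟩ := (range_eMap hpq (eMap p q j)).1 ⟨j, rfl⟩
          exact (range_eMap hσpq _).2
            ⟨fun hc => h1 (σ.injective hc), fun hc => h2 (σ.injective hc)⟩
        · intro hx
          obtain ⟨h1, h2⟩ := (range_eMap hσpq x).1 hx
          obtain ⟨j, hj⟩ := (range_eMap hpq (σ.symm x)).2
            ⟨fun hc => h1 (by rw [← hc, Equiv.apply_symm_apply]),
             fun hc => h2 (by rw [← hc, Equiv.apply_symm_apply])⟩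
          exact ⟨j, by show σ (eMap p q j) = x; rw [hj, Equiv.apply_symm_apply]⟩
      rw [if_congr hcond hval rfl]
  calc ∑ p, ∑ q, (if p ≠ q ∧ (J ∘ ⇑σ) p = (J ∘ ⇑σ) q
          then V' (fun j => (J ∘ ⇑σ) (eMap p q j)) else 0)
      = ∑ p, ∑ q, (if σ p ≠ σ q ∧ J (σ p) = J (σ q)
          then V' (fun j => J (eMap (σ p) (σ q) j)) else 0) :=
        Finset.sum_congr rfl fun p _ => Finset.sum_congr rfl fun q _ => step p q
    _ = ∑ p, ∑ q, (if p ≠ q ∧ J p = J q then V' (fun j => J (eMap p q j)) else 0) := by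
        rw [← Equiv.sum_comp σ (fun p => ∑ q, (if p ≠ q ∧ J p = J q
          then V' (fun j => J (eMap p q j)) else 0))]
        refine Finset.sum_congr rfl fun p _ => ?_
        rw [← Equiv.sum_comp σ (fun q => (if σ p ≠ q ∧ J (σ p) = J q
          then V' (fun j => J (eMap (σ p) q j)) else 0))]

/-! layer 8 : trace of Dt1 -/

lemma fin_zero_ne_ss {m : ℕ} (j : Fin m) : (0 : Fin (m+2)) ≠ j.succ.succ :=
  Ne.symm (Fin.succ_ne_zero _)

lemma fin_one_ne_ss {m : ℕ} (j : Fin m) : (1 : Fin (m+2)) ≠ j.succ.succ := by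
  rw [← Fin.succ_zero_eq_one]
  intro hc
  exact Fin.succ_ne_zero _ (Fin.succ_injective _ hc).symm

lemma val_eMap_two {m : ℕ} {V' : Tensor m} (hVsym : IsSym V') (K : Fin m → Fin 3)
    {p q : Fin (m+2)} (hpq : p ≠ q) (a : Fin 3)
    (hp : (Fin.cons a (Fin.cons a K) : Fin (m+2) → Fin 3) p = a)
    (hq : (Fin.cons a (Fin.cons a K) : Fin (m+2) → Fin 3) q = a) :
    V' (fun j => (Fin.cons a (Fin.cons a K) : Fin (m+2) → Fin 3) (eMap p q j)) = V' K := by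
  refine sym_eq_of_cnt hVsym fun v => ?_
  have h1 := cnt_eMap hpq (Fin.cons a (Fin.cons a K) : Fin (m+2) → Fin 3) v
  rw [hp, hq] at h1
  have h2 : cnt (Fin.cons a (Fin.cons a K) : Fin (m+2) → Fin 3) v
      = (if a = v then 1 else 0) + ((if a = v then 1 else 0) + cnt K v) := by
    rw [cnt_cons, cnt_cons]
  omega

lemma sum3_split {m : ℕ} {M : Type*} [AddCommMonoid M] (f : Fin (m+2) → M) :
    ∑ x, f x = f 0 + f 1 + ∑ j : Fin m, f j.succ.succ := by
  rw [Fin.sum_univ_succ, Fin.sum_univ_succ]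
  simp only [Fin.succ_zero_eq_one]
  exact (add_assoc _ _ _).symm

lemma sum3_assemble {m : ℕ} {M : Type*} [AddCommMonoid M] (t : Fin (m+2) → Fin (m+2) → M)
    (v2 w : M) (hd : ∀ p, t p p = 0) (h01 : t 0 1 = v2) (h10 : t 1 0 = v2)
    (h0j : ∀ j : Fin m, t 0 j.succ.succ = w) (hj0 : ∀ j : Fin m, t j.succ.succ 0 = w)
    (h1j : ∀ j : Fin m, t 1 j.succ.succ = w) (hj1 : ∀ j : Fin m, t j.succ.succ 1 = w)
    (hij : ∀ i j : Fin m, t i.succ.succ j.succ.succ = 0) :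
    ∑ p, ∑ q, t p q = 2 • v2 + (4 * m) • w := by
  rw [sum3_split (f := fun p => ∑ q, t p q), sum3_split (f := fun q => t 0 q),
    sum3_split (f := fun q => t 1 q)]
  have hsplit3 : (∑ j : Fin m, ∑ q, t j.succ.succ q)
      = ∑ j : Fin m, (t j.succ.succ 0 + t j.succ.succ 1
          + ∑ i : Fin m, t j.succ.succ i.succ.succ) :=
    Finset.sum_congr rfl fun j _ => sum3_split _
  rw [hsplit3]
  have h3 : (∑ j : Fin m, (t j.succ.succ 0 + t j.succ.succ 1
      + ∑ i : Fin m, t j.succ.succ i.succ.succ)) = ∑ _j : Fin m, (w + w) :=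
    Finset.sum_congr rfl fun j _ => by
      rw [hj0 j, hj1 j, Finset.sum_eq_zero fun i _ => hij j i, add_zero]
  have h4 : (∑ j : Fin m, t 0 j.succ.succ) = ∑ _j : Fin m, w :=
    Finset.sum_congr rfl fun j _ => h0j j
  have h5 : (∑ j : Fin m, t 1 j.succ.succ) = ∑ _j : Fin m, w :=
    Finset.sum_congr rfl fun j _ => h1j j
  rw [h3, h4, h5, hd 0, hd 1, h01, h10]
  simp only [Finset.sum_const, Finset.card_univ, Fintype.card_fin, zero_add, add_zero]
  have : (4 * m) • w = 2 • m • w + m • 2 • w := by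
    rw [smul_smul, smul_smul, ← add_smul]
    congr 1
    ring
  rw [this]
  abel

lemma trace_Dt1 {m : ℕ} {V' : Tensor m} (hVsym : IsSym V') (hVtf : IsTraceFree V')
    (K : Fin m → Fin 3) :
    ∑ a, Dt1 V' (Fin.cons a (Fin.cons a K)) = (4*(m:ℝ)+6) * V' K := by
  -- notation: t a p q
  have hdiag : ∀ (a : Fin 3) (p : Fin (m+2)),
      (if p ≠ p ∧ (Fin.cons a (Fin.cons a K) : Fin (m+2) → Fin 3) p
          = (Fin.cons a (Fin.cons a K) : Fin (m+2) → Fin 3) p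
        then V' (fun j => (Fin.cons a (Fin.cons a K) : Fin (m+2) → Fin 3) (eMap p p j))
        else 0) = 0 := by
    intro a p
    simp
  -- case (0,1) and (1,0)
  have h01 : ∀ a : Fin 3,
      (if (0 : Fin (m+2)) ≠ 1 ∧ (Fin.cons a (Fin.cons a K) : Fin (m+2) → Fin 3) 0
          = (Fin.cons a (Fin.cons a K) : Fin (m+2) → Fin 3) 1
        then V' (fun j => (Fin.cons a (Fin.cons a K) : Fin (m+2) → Fin 3) (eMap 0 1 j))
        else 0) = V' K := by
    intro a
    rw [if_pos ⟨fin_zero_ne_one, by rw [cons2_zero, cons2_one]⟩]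
    exact val_eMap_two hVsym K fin_zero_ne_one a (cons2_zero a a K) (cons2_one a a K)
  have h10 : ∀ a : Fin 3,
      (if (1 : Fin (m+2)) ≠ 0 ∧ (Fin.cons a (Fin.cons a K) : Fin (m+2) → Fin 3) 1
          = (Fin.cons a (Fin.cons a K) : Fin (m+2) → Fin 3) 0
        then V' (fun j => (Fin.cons a (Fin.cons a K) : Fin (m+2) → Fin 3) (eMap 1 0 j))
        else 0) = V' K := by
    intro a
    rw [if_pos ⟨Ne.symm fin_zero_ne_one, by rw [cons2_zero, cons2_one]⟩]
    exact val_eMap_two hVsym K (Ne.symm fin_zero_ne_one) a (cons2_one a a K) (cons2_zero a a K)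
  -- mixed cases
  have h0j : ∀ j : Fin m, ∑ a : Fin 3,
      (if (0 : Fin (m+2)) ≠ j.succ.succ ∧ (Fin.cons a (Fin.cons a K) : Fin (m+2) → Fin 3) 0
          = (Fin.cons a (Fin.cons a K) : Fin (m+2) → Fin 3) j.succ.succ
        then V' (fun j' => (Fin.cons a (Fin.cons a K) : Fin (m+2) → Fin 3) (eMap 0 j.succ.succ j'))
        else 0) = V' K := by
    intro j
    have e : ∀ a : Fin 3,
        (if (0 : Fin (m+2)) ≠ j.succ.succ ∧ (Fin.cons a (Fin.cons a K) : Fin (m+2) → Fin 3) 0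
            = (Fin.cons a (Fin.cons a K) : Fin (m+2) → Fin 3) j.succ.succ
          then V' (fun j' => (Fin.cons a (Fin.cons a K) : Fin (m+2) → Fin 3)
            (eMap 0 j.succ.succ j'))
          else 0) = if a = K j then V' K else 0 := by
      intro a
      by_cases ha : a = K j
      · rw [if_pos ⟨fin_zero_ne_ss j, by rw [cons2_zero, cons2_ss]; exact ha⟩, if_pos ha]
        exact val_eMap_two hVsym K (fin_zero_ne_ss j) a (cons2_zero a a K)
          ((cons2_ss a a K j).trans ha.symm)
      · rw [if_neg (fun hc => ha (by
          have := hc.2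
          rwa [cons2_zero, cons2_ss] at this)), if_neg ha]
    rw [Finset.sum_congr rfl fun a _ => e a]
    simp
  have hj0 : ∀ j : Fin m, ∑ a : Fin 3,
      (if (j.succ.succ : Fin (m+2)) ≠ 0 ∧ (Fin.cons a (Fin.cons a K) : Fin (m+2) → Fin 3) j.succ.succ
          = (Fin.cons a (Fin.cons a K) : Fin (m+2) → Fin 3) 0
        then V' (fun j' => (Fin.cons a (Fin.cons a K) : Fin (m+2) → Fin 3) (eMap j.succ.succ 0 j'))
        else 0) = V' K := by
    intro j
    have e : ∀ a : Fin 3,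
        (if (j.succ.succ : Fin (m+2)) ≠ 0 ∧ (Fin.cons a (Fin.cons a K) : Fin (m+2) → Fin 3) j.succ.succ
            = (Fin.cons a (Fin.cons a K) : Fin (m+2) → Fin 3) 0
          then V' (fun j' => (Fin.cons a (Fin.cons a K) : Fin (m+2) → Fin 3)
            (eMap j.succ.succ 0 j'))
          else 0) = if a = K j then V' K else 0 := by
      intro a
      by_cases ha : a = K j
      · rw [if_pos ⟨Ne.symm (fin_zero_ne_ss j), by rw [cons2_zero, cons2_ss]; exact ha.symm⟩,
          if_pos ha]
        exact val_eMap_two hVsym K (Ne.symm (fin_zero_ne_ss j)) a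
          ((cons2_ss a a K j).trans ha.symm) (cons2_zero a a K)
      · rw [if_neg (fun hc => ha (by
          have := hc.2
          rw [cons2_zero, cons2_ss] at this
          exact this.symm)), if_neg ha]
    rw [Finset.sum_congr rfl fun a _ => e a]
    simp
  have h1j : ∀ j : Fin m, ∑ a : Fin 3,
      (if (1 : Fin (m+2)) ≠ j.succ.succ ∧ (Fin.cons a (Fin.cons a K) : Fin (m+2) → Fin 3) 1
          = (Fin.cons a (Fin.cons a K) : Fin (m+2) → Fin 3) j.succ.succ
        then V' (fun j' => (Fin.cons a (Fin.cons a K) : Fin (m+2) → Fin 3) (eMap 1 j.succ.succ j'))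
        else 0) = V' K := by
    intro j
    have e : ∀ a : Fin 3,
        (if (1 : Fin (m+2)) ≠ j.succ.succ ∧ (Fin.cons a (Fin.cons a K) : Fin (m+2) → Fin 3) 1
            = (Fin.cons a (Fin.cons a K) : Fin (m+2) → Fin 3) j.succ.succ
          then V' (fun j' => (Fin.cons a (Fin.cons a K) : Fin (m+2) → Fin 3)
            (eMap 1 j.succ.succ j'))
          else 0) = if a = K j then V' K else 0 := by
      intro a
      by_cases ha : a = K j
      · rw [if_pos ⟨fin_one_ne_ss j, by rw [cons2_one, cons2_ss]; exact ha⟩, if_pos ha]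
        exact val_eMap_two hVsym K (fin_one_ne_ss j) a (cons2_one a a K)
          ((cons2_ss a a K j).trans ha.symm)
      · rw [if_neg (fun hc => ha (by
          have := hc.2
          rwa [cons2_one, cons2_ss] at this)), if_neg ha]
    rw [Finset.sum_congr rfl fun a _ => e a]
    simp
  have hj1 : ∀ j : Fin m, ∑ a : Fin 3,
      (if (j.succ.succ : Fin (m+2)) ≠ 1 ∧ (Fin.cons a (Fin.cons a K) : Fin (m+2) → Fin 3) j.succ.succ
          = (Fin.cons a (Fin.cons a K) : Fin (m+2) → Fin 3) 1
        then V' (fun j' => (Fin.cons a (Fin.cons a K) : Fin (m+2) → Fin 3) (eMap j.succ.succ 1 j'))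
        else 0) = V' K := by
    intro j
    have e : ∀ a : Fin 3,
        (if (j.succ.succ : Fin (m+2)) ≠ 1 ∧ (Fin.cons a (Fin.cons a K) : Fin (m+2) → Fin 3) j.succ.succ
            = (Fin.cons a (Fin.cons a K) : Fin (m+2) → Fin 3) 1
          then V' (fun j' => (Fin.cons a (Fin.cons a K) : Fin (m+2) → Fin 3)
            (eMap j.succ.succ 1 j'))
          else 0) = if a = K j then V' K else 0 := by
      intro a
      by_cases ha : a = K j
      · rw [if_pos ⟨Ne.symm (fin_one_ne_ss j), by rw [cons2_one, cons2_ss]; exact ha.symm⟩,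
          if_pos ha]
        exact val_eMap_two hVsym K (Ne.symm (fin_one_ne_ss j)) a
          ((cons2_ss a a K j).trans ha.symm) (cons2_one a a K)
      · rw [if_neg (fun hc => ha (by
          have := hc.2
          rw [cons2_one, cons2_ss] at this
          exact this.symm)), if_neg ha]
    rw [Finset.sum_congr rfl fun a _ => e a]
    simp
  have hij : ∀ i j : Fin m, ∑ a : Fin 3,
      (if (i.succ.succ : Fin (m+2)) ≠ j.succ.succ
          ∧ (Fin.cons a (Fin.cons a K) : Fin (m+2) → Fin 3) i.succ.succ
            = (Fin.cons a (Fin.cons a K) : Fin (m+2) → Fin 3) j.succ.succ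
        then V' (fun j' => (Fin.cons a (Fin.cons a K) : Fin (m+2) → Fin 3)
          (eMap i.succ.succ j.succ.succ j'))
        else 0) = 0 := by
    intro i j
    by_cases hijeq : i = j
    · subst hijeq
      simp
    · have hpq : (i.succ.succ : Fin (m+2)) ≠ j.succ.succ :=
        fun hc => hijeq (Fin.succ_injective _ (Fin.succ_injective _ hc))
      by_cases hK : K i = K j
      · have e : ∀ a : Fin 3,
            (if (i.succ.succ : Fin (m+2)) ≠ j.succ.succ
                ∧ (Fin.cons a (Fin.cons a K) : Fin (m+2) → Fin 3) i.succ.succ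
                  = (Fin.cons a (Fin.cons a K) : Fin (m+2) → Fin 3) j.succ.succ
              then V' (fun j' => (Fin.cons a (Fin.cons a K) : Fin (m+2) → Fin 3)
                (eMap i.succ.succ j.succ.succ j'))
              else 0)
            = V' (fun j' => (Fin.cons a (Fin.cons a K) : Fin (m+2) → Fin 3)
                (eMap i.succ.succ j.succ.succ j')) := by
          intro a
          rw [if_pos ⟨hpq, by rw [cons2_ss, cons2_ss]; exact hK⟩]
        rw [Finset.sum_congr rfl fun a _ => e a]
        obtain ⟨s0, hs0⟩ : ∃ s0, eMap (i.succ.succ : Fin (m+2)) j.succ.succ s0 = 0 :=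
          (range_eMap hpq 0).2 ⟨fin_zero_ne_ss i, fin_zero_ne_ss j⟩
        obtain ⟨t0, ht0⟩ : ∃ t0, eMap (i.succ.succ : Fin (m+2)) j.succ.succ t0 = 1 :=
          (range_eMap hpq 1).2 ⟨fin_one_ne_ss i, fin_one_ne_ss j⟩
        exact trace_aux hVtf _ (eMap_injective _ _) hs0 ht0 K
      · refine Finset.sum_eq_zero fun a _ => ?_
        rw [if_neg (fun hc => hK (by
          have := hc.2
          rwa [cons2_ss, cons2_ss] at this))]
  -- now assemble
  unfold Dt1
  refine (Finset.sum_comm.trans (Finset.sum_congr rfl fun p _ => Finset.sum_comm)).trans ?_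
  rw [sum3_assemble
    (fun p q => ∑ a : Fin 3,
      (if p ≠ q ∧ (Fin.cons a (Fin.cons a K) : Fin (m+2) → Fin 3) p
          = (Fin.cons a (Fin.cons a K) : Fin (m+2) → Fin 3) q
        then V' (fun j => (Fin.cons a (Fin.cons a K) : Fin (m+2) → Fin 3) (eMap p q j))
        else 0))
    (∑ _a : Fin 3, V' K) (V' K)
    (fun p => Finset.sum_eq_zero fun a _ => hdiag a p)
    (Finset.sum_congr rfl fun a _ => h01 a)
    (Finset.sum_congr rfl fun a _ => h10 a)
    h0j hj0 h1j hj1 hij]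
  simp only [Finset.sum_const, Finset.card_univ, Fintype.card_fin, smul_eq_mul, nsmul_eq_mul]
  push_cast
  ring

/-! layer 9 : pairing identities -/

lemma pair_contract {m : ℕ} {T : Tensor (m+2)} (hT : IsSym T) (W : Tensor m)
    {p q : Fin (m+2)} (hpq : p ≠ q) :
    ∑ J : Fin (m+2) → Fin 3, T J * (if J p = J q then W (fun j => J (eMap p q j)) else 0)
      = ∑ M : Fin m → Fin 3, (∑ a, T (Fin.cons a (Fin.cons a M))) * W M := by
  have hp0 : (pqPerm p q).symm p = 0 := by
    rw [Equiv.symm_apply_eq, pqPerm_zero hpq]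
  have hq1 : (pqPerm p q).symm q = 1 := by
    rw [Equiv.symm_apply_eq, pqPerm_one hpq]
  rw [← Equiv.sum_comp (Equiv.arrowCongr (pqPerm p q) (Equiv.refl (Fin 3)))
      (fun J => T J * (if J p = J q then W (fun j => J (eMap p q j)) else 0))]
  have harr : ∀ K : Fin (m+2) → Fin 3,
      (Equiv.arrowCongr (pqPerm p q) (Equiv.refl (Fin 3))) K = K ∘ ⇑(pqPerm p q).symm :=
    fun K => by funext x; simp [Equiv.arrowCongr]
  calc ∑ K : Fin (m+2) → Fin 3, (fun J => T J
        * (if J p = J q then W (fun j => J (eMap p q j)) else 0))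
          ((Equiv.arrowCongr (pqPerm p q) (Equiv.refl (Fin 3))) K)
      = ∑ K : Fin (m+2) → Fin 3, T K * (if K 0 = K 1 then W (fun j => K j.succ.succ) else 0) := by
        refine Finset.sum_congr rfl fun K _ => ?_
        simp only [harr K]
        have hT1 : T (K ∘ ⇑(pqPerm p q).symm) = T K := hT (pqPerm p q).symm K
        have e1 : (K ∘ ⇑(pqPerm p q).symm) p = K 0 := by
          simp only [Function.comp_apply, hp0]
        have e2 : (K ∘ ⇑(pqPerm p q).symm) q = K 1 := by
          simp only [Function.comp_apply, hq1]
        have e3 : (fun j => (K ∘ ⇑(pqPerm p q).symm) (eMap p q j))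
            = fun j => K j.succ.succ := by
          funext j
          show K ((pqPerm p q).symm (pqPerm p q j.succ.succ)) = K j.succ.succ
          rw [Equiv.symm_apply_apply]
        rw [hT1, e1, e2, e3]
    _ = ∑ M : Fin m → Fin 3, (∑ a, T (Fin.cons a (Fin.cons a M))) * W M := by
        rw [sum_pi_succ (fun K => T K * (if K 0 = K 1 then W (fun j => K j.succ.succ) else 0))]
        have inner : ∀ a : Fin 3, (∑ I : Fin (m+1) → Fin 3, T (Fin.cons a I)
            * (if (Fin.cons a I : Fin (m+2) → Fin 3) 0 = (Fin.cons a I : Fin (m+2) → Fin 3) 1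
                then W (fun j => (Fin.cons a I : Fin (m+2) → Fin 3) j.succ.succ) else 0))
            = ∑ b : Fin 3, ∑ M : Fin m → Fin 3, T (Fin.cons a (Fin.cons b M))
                * (if a = b then W M else 0) := by
          intro a
          rw [sum_pi_succ (fun I => T (Fin.cons a I)
            * (if (Fin.cons a I : Fin (m+2) → Fin 3) 0 = (Fin.cons a I : Fin (m+2) → Fin 3) 1
                then W (fun j => (Fin.cons a I : Fin (m+2) → Fin 3) j.succ.succ) else 0))]
          refine Finset.sum_congr rfl fun b _ => Finset.sum_congr rfl fun M _ => ?_
          simp only [cons2_zero, cons2_one, cons2_ss]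
    -- combine
        rw [Finset.sum_congr rfl fun a _ => inner a]
        have swap : (∑ a : Fin 3, ∑ b : Fin 3, ∑ M : Fin m → Fin 3,
            T (Fin.cons a (Fin.cons b M)) * (if a = b then W M else 0))
            = ∑ M : Fin m → Fin 3, ∑ a : Fin 3, ∑ b : Fin 3,
            T (Fin.cons a (Fin.cons b M)) * (if a = b then W M else 0) :=
          (Finset.sum_congr rfl fun a _ => Finset.sum_comm).trans Finset.sum_comm
        rw [swap]
        refine Finset.sum_congr rfl fun M _ => ?_
        rw [Finset.sum_mul]
        refine Finset.sum_congr rfl fun a _ => ?_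
        have : ∀ b : Fin 3, T (Fin.cons a (Fin.cons b M)) * (if a = b then W M else 0)
            = if a = b then T (Fin.cons a (Fin.cons b M)) * W M else 0 := by
          intro b
          by_cases hab : a = b <;> simp [hab]
        rw [Finset.sum_congr rfl fun b _ => this b, Finset.sum_ite_eq]
        simp

lemma tInner_Dt1 {m : ℕ} {T : Tensor (m+2)} (hTsym : IsSym T) (V' : Tensor m) :
    tInner T (Dt1 V') = ((m:ℝ)+2) * ((m:ℝ)+1)
      * ∑ M : Fin m → Fin 3, (∑ a, T (Fin.cons a (Fin.cons a M))) * V' M := by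
  unfold tInner Dt1
  set CT := ∑ M : Fin m → Fin 3, (∑ a, T (Fin.cons a (Fin.cons a M))) * V' M with hCT
  calc ∑ J : Fin (m+2) → Fin 3, T J * (∑ p, ∑ q,
        if p ≠ q ∧ J p = J q then V' (fun j => J (eMap p q j)) else 0)
      = ∑ p : Fin (m+2), ∑ q : Fin (m+2), ∑ J : Fin (m+2) → Fin 3, T J *
        (if p ≠ q ∧ J p = J q then V' (fun j => J (eMap p q j)) else 0) := by
        simp_rw [Finset.mul_sum]
        rw [Finset.sum_comm]
        exact Finset.sum_congr rfl fun p _ => Finset.sum_comm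
    _ = ∑ p : Fin (m+2), ∑ q : Fin (m+2), (if p ≠ q then CT else 0) := by
        refine Finset.sum_congr rfl fun p _ => Finset.sum_congr rfl fun q _ => ?_
        by_cases hpq : p = q
        · subst hpq
          simp
        · rw [if_pos hpq]
          have : ∀ J : Fin (m+2) → Fin 3, (if p ≠ q ∧ J p = J q
              then V' (fun j => J (eMap p q j)) else 0)
              = (if J p = J q then V' (fun j => J (eMap p q j)) else 0) := by
            intro J
            by_cases hJ : J p = J q
            · rw [if_pos ⟨hpq, hJ⟩, if_pos hJ]
            · rw [if_neg (fun hc => hJ hc.2), if_neg hJ]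
          rw [Finset.sum_congr rfl fun J _ => by rw [this J]]
          exact pair_contract hTsym V' hpq
    _ = ((m:ℝ)+2) * ((m:ℝ)+1) * CT := by
        have hq : ∀ p : Fin (m+2), (∑ q : Fin (m+2), if p ≠ q then CT else 0)
            = ((m:ℝ)+1) * CT := by
          intro p
          have : ∀ q : Fin (m+2), (if p ≠ q then CT else 0) = CT - (if p = q then CT else 0) := by
            intro q
            by_cases hpq : p = q <;> simp [hpq]
          rw [Finset.sum_congr rfl fun q _ => this q, Finset.sum_sub_distrib,
            Finset.sum_const, Finset.sum_ite_eq, Finset.card_univ, Fintype.card_fin]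
          simp only [Finset.mem_univ, if_pos, nsmul_eq_mul]
          push_cast
          ring
        rw [Finset.sum_congr rfl fun p _ => hq p, Finset.sum_const, Finset.card_univ,
          Fintype.card_fin, nsmul_eq_mul]
        push_cast
        ring

lemma pair_eval {m : ℕ} (n : Fin 3 → ℝ) {T : Tensor (m+2)} (hT : IsSym T)
    {U : Tensor (m+1)} (hU : IsSym U) :
    tInner T (Wt1 n U) = ((m : ℝ)+2) * tInner (contr n T) U := by
  have hlin : tInner T (Wt1 n U)
      = ∑ k : Fin (m+2), tInner T (fun J => n (J k) * U (fun i => J (k.succAbove i))) := by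
    unfold tInner Wt1
    simp_rw [Finset.mul_sum]
    rw [Finset.sum_comm]
  have hstep : ∀ k : Fin (m+2), tInner T (fun J => n (J k) * U (fun i => J (k.succAbove i)))
      = tInner T (fun J => n (J 0) * U (fun i => J i.succ)) := by
    intro k
    have h := tInner_comp_perm hT (fun J => n (J 0) * U (fun i => J i.succ)) (Equiv.swap 0 k)
    rw [← h]
    refine congrArg (tInner T) ?_
    funext J
    simp only [Function.comp_apply]
    rw [Equiv.swap_apply_left]
    congr 1
    refine sym_comp_eq hU (f := k.succAbove) (g := fun i => Equiv.swap 0 k i.succ)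
      Fin.succAbove_right_injective
      (fun i j h' => Fin.succ_injective _ ((Equiv.swap 0 k).injective h')) ?_
    rw [Fin.range_succAbove]
    have hcmp : (fun i : Fin (m+1) => Equiv.swap 0 k i.succ)
        = ⇑(Equiv.swap 0 k) ∘ Fin.succ := rfl
    rw [hcmp, Set.range_comp, Fin.range_succ, Set.image_compl_eq (Equiv.bijective _),
      Set.image_singleton, Equiv.swap_apply_left]
  have hbase : tInner T (fun J => n (J 0) * U (fun i => J i.succ)) = tInner (contr n T) U := by
    unfold tInner contr
    rw [sum_pi_succ (fun J => T J * (n (J 0) * U (fun i => J i.succ)))]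
    rw [Finset.sum_comm]
    refine Finset.sum_congr rfl fun I _ => ?_
    rw [Finset.sum_mul]
    refine Finset.sum_congr rfl fun a _ => ?_
    have h1 : (fun i => (Fin.cons a I : Fin (m+2) → Fin 3) i.succ) = I := by
      funext i
      simp
    rw [h1, Fin.cons_zero]
    ring
  rw [hlin, Finset.sum_congr rfl fun k _ => (hstep k).trans hbase, Finset.sum_const,
    Finset.card_univ, Fintype.card_fin, nsmul_eq_mul]
  push_cast
  ring

/-! layer 10 : STF algebra and the key contraction identity -/

lemma isSym_sub_smul {r : ℕ} {A B : Tensor r} (hA : IsSym A) (hB : IsSym B) (c : ℝ) :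
    IsSym (fun I => A I - c * B I) := by
  intro σ I
  simp only []
  rw [hA σ I, hB σ I]

lemma isTraceFree_sub_smul {r : ℕ} {A B : Tensor r} (hA : IsTraceFree A) (hB : IsTraceFree B)
    (c : ℝ) : IsTraceFree (fun I => A I - c * B I) := by
  intro p q hpq I
  simp only []
  rw [Finset.sum_sub_distrib, ← Finset.mul_sum, hA p q hpq I, hB p q hpq I, mul_zero, sub_zero]

lemma isSTF_sub_smul {r : ℕ} {A B : Tensor r} (hA : IsSTF A) (hB : IsSTF B) (c : ℝ) :
    IsSTF (fun I => A I - c * B I) :=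
  ⟨isSym_sub_smul hA.1 hB.1 c, isTraceFree_sub_smul hA.2 hB.2 c⟩

lemma tInner_self_zero {r : ℕ} {D : Tensor r} (h : tInner D D = 0) : ∀ I, D I = 0 := by
  intro I
  have h' : ∑ J : Fin r → Fin 3, D J * D J = 0 := h
  have hnn : ∀ J ∈ (Finset.univ : Finset (Fin r → Fin 3)), 0 ≤ D J * D J :=
    fun J _ => mul_self_nonneg _
  exact mul_self_eq_zero.1 ((Finset.sum_eq_zero_iff_of_nonneg hnn).1 h' I (Finset.mem_univ I))

lemma stfPart_eq_self {r : ℕ} {A T : Tensor r} (hA : IsSTFPartOf A T) (hT : IsSTF T) :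
    ∀ I, A I = T I := by
  obtain ⟨hASTF, hproj⟩ := hA
  have hDSTF : IsSTF (fun I => T I - 1 * A I) := isSTF_sub_smul hT hASTF 1
  have h0 := hproj _ hDSTF
  rw [tInner_pi_sub_left] at h0
  have hDD : tInner (fun I => T I - 1 * A I) (fun I => T I - 1 * A I) = 0 := by
    rw [tInner_sub_smul_left]
    linarith
  intro I
  have hz := tInner_self_zero hDD I
  simp only [one_mul] at hz
  linarith

lemma key {m : ℕ} (n : Fin 3 → ℝ) (hn : ∑ i, n i ^ 2 = 1)
    {Thi : Tensor (m+2)} (hThi : IsSTFPartOf Thi (vecPow n (m+2)))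
    {U : Tensor (m+1)} (hU : IsSTF U) :
    tInner (contr n Thi) U = (((m:ℝ)+2) / (2*(m:ℝ)+3)) * tInner (vecPow n (m+1)) U := by
  obtain ⟨⟨hTsym, hTtf⟩, hTproj⟩ := hThi
  obtain ⟨hUsym, hUtf⟩ := hU
  have hVsym : IsSym (contr n U) := isSym_contr hUsym
  have hVtf : IsTraceFree (contr n U) := isTraceFree_contr hUtf
  set X := tInner (vecPow n (m+1)) U with hX
  have h2m3 : (2*(m:ℝ)+3) ≠ 0 := by positivity
  have hm2 : ((m:ℝ)+2) ≠ 0 := by positivity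
  have hWtSym : IsSym (fun J => Wt1 n U J - (2*(m:ℝ)+3)⁻¹ * Dt1 (contr n U) J) := by
    intro σ J
    show Wt1 n U (J ∘ ⇑σ) - (2*(m:ℝ)+3)⁻¹ * Dt1 (contr n U) (J ∘ ⇑σ)
        = Wt1 n U J - (2*(m:ℝ)+3)⁻¹ * Dt1 (contr n U) J
    rw [isSym_Wt1 n hUsym σ J, isSym_Dt1 hVsym σ J]
  have hWtTf : IsTraceFree (fun J => Wt1 n U J - (2*(m:ℝ)+3)⁻¹ * Dt1 (contr n U) J) := by
    refine isTraceFree_of_sym_trace hWtSym fun K => ?_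
    show ∑ a : Fin 3, (Wt1 n U (Fin.cons a (Fin.cons a K))
        - (2*(m:ℝ)+3)⁻¹ * Dt1 (contr n U) (Fin.cons a (Fin.cons a K))) = 0
    rw [Finset.sum_sub_distrib, ← Finset.mul_sum, trace_Wt1 n hUtf K,
      trace_Dt1 hVsym hVtf K]
    field_simp
    ring
  have hPD : tInner Thi (Dt1 (contr n U)) = 0 := by
    rw [tInner_Dt1 hTsym]
    have hz : ∑ M : Fin m → Fin 3, (∑ a, Thi (Fin.cons a (Fin.cons a M))) * contr n U M = 0 :=
      Finset.sum_eq_zero fun M _ => by rw [trace_cons hTtf M, zero_mul]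
    rw [hz, mul_zero]
  have hPW : tInner Thi (Wt1 n U) = ((m:ℝ)+2) * tInner (contr n Thi) U :=
    pair_eval n hTsym hUsym
  have hvsym := isSym_vecPow n (m+2)
  have hvW : tInner (vecPow n (m+2)) (Wt1 n U) = ((m:ℝ)+2) * X := by
    rw [pair_eval n hvsym hUsym, contr_vecPow n hn]
  have hvpair : ∑ M : Fin m → Fin 3,
      (∑ a, vecPow n (m+2) (Fin.cons a (Fin.cons a M))) * contr n U M = X := by
    have h1 : ∀ M : Fin m → Fin 3,
        (∑ a, vecPow n (m+2) (Fin.cons a (Fin.cons a M))) = vecPow n m M := by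
      intro M
      have h2 : ∀ a : Fin 3, vecPow n (m+2) (Fin.cons a (Fin.cons a M))
          = n a ^ 2 * vecPow n m M := by
        intro a
        rw [vecPow_cons, vecPow_cons]
        ring
      rw [Finset.sum_congr rfl fun a _ => h2 a, ← Finset.sum_mul, hn, one_mul]
    rw [Finset.sum_congr rfl fun M _ => by rw [h1 M]]
    show tInner (vecPow n m) (contr n U) = X
    rw [hX]
    unfold tInner contr
    rw [sum_pi_succ (fun J => vecPow n (m+1) J * U J)]
    simp_rw [Finset.mul_sum]
    rw [Finset.sum_comm]
    refine Finset.sum_congr rfl fun a _ => Finset.sum_congr rfl fun M _ => ?_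
    rw [vecPow_cons]
    ring
  have hvD : tInner (vecPow n (m+2)) (Dt1 (contr n U)) = ((m:ℝ)+2) * ((m:ℝ)+1) * X := by
    rw [tInner_Dt1 hvsym, hvpair]
  have hproj : tInner Thi (fun J => Wt1 n U J - (2*(m:ℝ)+3)⁻¹ * Dt1 (contr n U) J)
      = tInner (vecPow n (m+2)) (fun J => Wt1 n U J - (2*(m:ℝ)+3)⁻¹ * Dt1 (contr n U) J) := by
    have h0 := hTproj _ ⟨hWtSym, hWtTf⟩
    rw [tInner_pi_sub_left] at h0
    linarith
  rw [tInner_sub_smul_right, tInner_sub_smul_right] at hproj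
  have hfin : ((m:ℝ)+2) * tInner (contr n Thi) U
      = ((m:ℝ)+2)*X - (2*(m:ℝ)+3)⁻¹ * (((m:ℝ)+2) * ((m:ℝ)+1) * X) := by
    rw [← hPW]
    have : tInner Thi (Wt1 n U)
        = (tInner Thi (Wt1 n U) - (2*(m:ℝ)+3)⁻¹ * tInner Thi (Dt1 (contr n U)))
          + (2*(m:ℝ)+3)⁻¹ * tInner Thi (Dt1 (contr n U)) := by ring
    rw [this, hproj, hPD, mul_zero, add_zero, hvW, hvD]
  apply mul_left_cancel₀ hm2
  rw [hfin]
  field_simp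
  ring


theorem stmt4 (l : ℕ) (n : Fin 3 → ℝ) (hn : ∑ i, n i ^ 2 = 1)
    (Thi : Tensor (l + 1)) (hThi : IsSTFPartOf Thi (vecPow n (l + 1)))
    (Tlo : Tensor l) (hTlo : IsSTFPartOf Tlo (vecPow n l)) :
    ∀ I : Fin l → Fin 3,
      (∑ a : Fin 3, n a * Thi (Fin.cons a I))
        = ((l : ℝ) + 1) / (2 * l + 1) * Tlo I := by
  rcases l with _ | m
  · -- l = 0
    intro I
    have h1 : IsSTF (vecPow n 1) :=
      ⟨isSym_vecPow n 1, fun p q hpq _ => absurd (Subsingleton.elim p q) hpq⟩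
    have h0 : IsSTF (vecPow n 0) :=
      ⟨isSym_vecPow n 0, fun p q hpq _ => absurd (Subsingleton.elim p q) hpq⟩
    have hThiEq := stfPart_eq_self hThi h1
    have hTloEq := stfPart_eq_self hTlo h0
    rw [hTloEq I]
    have hv : ∀ a : Fin 3, Thi (Fin.cons a I) = n a := by
      intro a
      rw [hThiEq]
      unfold vecPow
      simp
    rw [Finset.sum_congr rfl fun a _ => by rw [hv a]]
    unfold vecPow
    have hsum : ∑ a : Fin 3, n a * n a = 1 := by
      rw [← hn]
      exact Finset.sum_congr rfl fun a _ => (sq (n a)).symm ▸ by ring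
    rw [hsum]
    simp
  · -- l = m + 1
    intro I
    have hSTF_S : IsSTF (contr n Thi) :=
      ⟨isSym_contr hThi.1.1, isTraceFree_contr hThi.1.2⟩
    have hSTF_Tlo := hTlo.1
    set c : ℝ := ((m:ℝ)+2)/(2*(m:ℝ)+3) with hc
    have hDSTF : IsSTF (fun J => contr n Thi J - c * Tlo J) :=
      isSTF_sub_smul hSTF_S hSTF_Tlo c
    have hkey := key n hn hThi hDSTF
    have hproj := hTlo.2 _ hDSTF
    rw [tInner_pi_sub_left] at hproj
    have hDD : tInner (fun J => contr n Thi J - c * Tlo J)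
        (fun J => contr n Thi J - c * Tlo J) = 0 := by
      rw [tInner_sub_smul_left, hkey]
      have heq : tInner (vecPow n (m+1)) (fun J => contr n Thi J - c * Tlo J)
          = tInner Tlo (fun J => contr n Thi J - c * Tlo J) := by linarith
      rw [heq]
      ring
    have hI := tInner_self_zero hDD I
    have hrfl : (∑ a : Fin 3, n a * Thi (Fin.cons a I)) = contr n Thi I := rfl
    rw [hrfl]
    have hc' : ((↑(m+1) : ℝ) + 1) / (2 * (↑(m+1):ℝ) + 1) = c := by
      rw [hc]
      push_cast
      ring_nf
    push_cast
    rw [show ((m:ℝ) + 1 + 1) / (2 * ((m:ℝ) + 1) + 1) = c from by rw [hc]; ring_nf]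
    linarith
end

section
/- For any unit vector n ∈ ℝ³ and l ≥ 1, the product n_i n̂_{a₁…a_l} decomposes as n̂_{i a₁…a_l} + (l/(2l+1)) · (the STF part over the indices a₁…a_l of δ_{i a₁} n̂_{a₂…a_l}). -/
open scoped Nat

namespace STF5


def msOf {k : ℕ} (f : Fin k → Fin 3) : Multiset (Fin 3) := Multiset.map f Finset.univ.val

@[simp] lemma card_msOf {k : ℕ} (f : Fin k → Fin 3) : Multiset.card (msOf f) = k := by
  simp [msOf]

lemma count_msOf {k : ℕ} (f : Fin k → Fin 3) (c : Fin 3) :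
    Multiset.count c (msOf f) = (Finset.univ.filter (fun a => f a = c)).card := by
  rw [msOf, Multiset.count_map]
  congr 1
  simp [Finset.filter, eq_comm]

lemma card_fiber {k : ℕ} (f : Fin k → Fin 3) (c : Fin 3) :
    Fintype.card {a // f a = c} = Multiset.count c (msOf f) := by
  rw [count_msOf, Fintype.card_subtype]

lemma sym_eq_of_msOf {k : ℕ} {T : Tensor k} (hT : IsSym T) {f g : Fin k → Fin 3}
    (h : msOf f = msOf g) : T f = T g := by
  have e : ∀ c, {a // f a = c} ≃ {a // g a = c} := fun c =>
    Fintype.equivOfCardEq (by rw [card_fiber, card_fiber, h])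
  have hσ : g ∘ (Equiv.ofFiberEquiv e : Fin k ≃ Fin k) = f :=
    funext fun a => Equiv.ofFiberEquiv_map e a
  rw [← hT (Equiv.ofFiberEquiv e) g, hσ]

lemma msOf_comp_perm {k : ℕ} (f : Fin k → Fin 3) (σ : Equiv.Perm (Fin k)) :
    msOf (f ∘ σ) = msOf f := by
  unfold msOf
  rw [show Multiset.map (f ∘ σ) Finset.univ.val = Multiset.map f (Multiset.map σ Finset.univ.val) by
    rw [Multiset.map_map]]
  congr 1
  have := Finset.map_univ_equiv σ
  calc Multiset.map σ Finset.univ.val = (Finset.univ.map σ.toEmbedding).val := by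
        simp [Finset.map_val]
    _ = Finset.univ.val := by rw [this]

@[simp] lemma msOf_cons {k : ℕ} (a : Fin 3) (f : Fin k → Fin 3) :
    msOf (Fin.cons a f) = a ::ₘ msOf f := by
  unfold msOf
  rw [Fin.univ_succ]
  simp only [Finset.cons_val, Multiset.map_cons, Fin.cons_zero, Finset.map_val,
    Multiset.map_map]
  congr 1

lemma msOf_succAbove {k : ℕ} (f : Fin (k+1) → Fin 3) (p : Fin (k+1)) :
    msOf f = f p ::ₘ msOf (f ∘ p.succAbove) := by
  conv_lhs => rw [msOf, Fin.univ_succAbove k p]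
  simp only [Finset.cons_val, Multiset.map_cons, Finset.map_val, Multiset.map_map]
  congr 1


lemma exists_tuple {k : ℕ} (M : Multiset (Fin 3)) (h : Multiset.card M = k) :
    ∃ f : Fin k → Fin 3, msOf f = M := by
  induction k generalizing M with
  | zero =>
    refine ⟨Fin.elim0, ?_⟩
    rw [Multiset.card_eq_zero] at h
    simp [msOf, h]
  | succ k ih =>
    have hne : M ≠ 0 := by
      intro h0; rw [h0] at h; simp at h
    obtain ⟨a, ha⟩ := Multiset.exists_mem_of_ne_zero hne
    obtain ⟨M', rfl⟩ := Multiset.exists_cons_of_mem ha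
    have : Multiset.card M' = k := by
      simpa using h
    obtain ⟨f, hf⟩ := ih M' this
    exact ⟨Fin.cons a f, by rw [msOf_cons, hf]⟩

noncomputable def Sms {k : ℕ} (S : Tensor k) (M : Multiset (Fin 3)) : ℝ :=
  if h : ∃ f : Fin k → Fin 3, msOf f = M then S h.choose else 0

lemma Sms_msOf {k : ℕ} {S : Tensor k} (hS : IsSym S) (f : Fin k → Fin 3) :
    Sms S (msOf f) = S f := by
  have h : ∃ g : Fin k → Fin 3, msOf g = msOf f := ⟨f, rfl⟩
  rw [Sms, dif_pos h]
  exact sym_eq_of_msOf hS h.choose_spec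

lemma update_update_cons {c : ℕ} (a x y : Fin 3) (f : Fin c → Fin 3) :
    Function.update (Function.update (Fin.cons x (Fin.cons y f) : Fin (c+2) → Fin 3) 0 a) 1 a
      = (Fin.cons a (Fin.cons a f) : Fin (c+2) → Fin 3) := by
  funext j
  have h01 : (0 : Fin (c+2)) ≠ 1 := by simp [Fin.ext_iff]
  rcases Fin.eq_zero_or_eq_succ j with rfl | ⟨j', rfl⟩
  · simp [Function.update_apply, h01]
  · rcases Fin.eq_zero_or_eq_succ j' with rfl | ⟨j'', rfl⟩
    · simp [Function.update_apply, Fin.succ_zero_eq_one]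
    · have h1 : j''.succ.succ ≠ (1 : Fin (c+2)) := by
        simp [Fin.ext_iff]
      have h0 : j''.succ.succ ≠ (0 : Fin (c+2)) := by
        simp [Fin.ext_iff]
      simp [Function.update_apply, h1, h0]

lemma trace_Sms {k : ℕ} {S : Tensor k} (hS : IsSym S) (hTF : IsTraceFree S)
    (M : Multiset (Fin 3)) (h : Multiset.card M + 2 = k) :
    ∑ a : Fin 3, Sms S (a ::ₘ a ::ₘ M) = 0 := by
  subst h
  obtain ⟨f, hf⟩ := exists_tuple M rfl
  have key : ∀ a : Fin 3, Sms S (a ::ₘ a ::ₘ M) = S (Fin.cons a (Fin.cons a f)) := by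
    intro a
    rw [← Sms_msOf hS (Fin.cons a (Fin.cons a f)), msOf_cons, msOf_cons, hf]
  simp only [key]
  have h01 : (0 : Fin (Multiset.card M + 2)) ≠ 1 := by simp [Fin.ext_iff]
  have := hTF 0 1 h01 (Fin.cons 0 (Fin.cons 0 f))
  simpa only [update_update_cons] using this


lemma sum_split {k : ℕ} (F : (Fin (k+1) → Fin 3) → ℝ) :
    ∑ J : Fin (k+1) → Fin 3, F J = ∑ a : Fin 3, ∑ L : Fin k → Fin 3, F (Fin.cons a L) := by
  rw [← (Fin.consEquiv (fun _ => Fin 3)).sum_comp F, Fintype.sum_prod_type]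
  rfl

lemma sum_comp_perm {k : ℕ} (σ : Equiv.Perm (Fin k)) (F : (Fin k → Fin 3) → ℝ) :
    ∑ J : Fin k → Fin 3, F (J ∘ σ) = ∑ J : Fin k → Fin 3, F J := by
  exact Equiv.sum_comp (Equiv.arrowCongr σ.symm (Equiv.refl (Fin 3))) F

lemma exists_perm_01 {k : ℕ} {p q : Fin (k+2)} (h : p ≠ q) :
    ∃ ρ : Equiv.Perm (Fin (k+2)), ρ 0 = p ∧ ρ 1 = q := by
  classical
  set ρ₁ := Equiv.swap (0 : Fin (k+2)) p with hρ₁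
  have hq' : ρ₁ q ≠ 0 := by
    intro h0
    have h2 : q = ρ₁ 0 := by
      have := congrArg ρ₁ h0
      simpa [hρ₁, Equiv.swap_apply_self] using this
    rw [hρ₁, Equiv.swap_apply_left] at h2
    exact h h2.symm
  refine ⟨ρ₁ * Equiv.swap 1 (ρ₁ q), ?_, ?_⟩
  · have h01 : (0 : Fin (k+2)) ≠ 1 := by simp [Fin.ext_iff]
    rw [Equiv.Perm.mul_apply, Equiv.swap_apply_of_ne_of_ne h01 (Ne.symm hq'), hρ₁,
      Equiv.swap_apply_left]
  · rw [Equiv.Perm.mul_apply, Equiv.swap_apply_left, hρ₁, Equiv.swap_apply_self]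

lemma sum_pair_reindex {k : ℕ} {U : Tensor (k+2)} (hU : IsSym U) {p q : Fin (k+2)}
    (hpq : p ≠ q) (G : Fin 3 → Fin 3 → Multiset (Fin 3) → ℝ) :
    ∑ J : Fin (k+2) → Fin 3, U J * G (J p) (J q) (msOf J)
      = ∑ J : Fin (k+2) → Fin 3, U J * G (J 0) (J 1) (msOf J) := by
  obtain ⟨ρ, h0, h1⟩ := exists_perm_01 hpq
  rw [← sum_comp_perm ρ (fun J => U J * G (J 0) (J 1) (msOf J))]
  apply Finset.sum_congr rfl
  intro J _
  simp only [Function.comp_apply, h0, h1, hU ρ J, msOf_comp_perm]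

lemma sum_single_reindex {k : ℕ} {U : Tensor (k+1)} (hU : IsSym U) (p : Fin (k+1))
    (G : Fin 3 → Multiset (Fin 3) → ℝ) :
    ∑ J : Fin (k+1) → Fin 3, U J * G (J p) (msOf J)
      = ∑ J : Fin (k+1) → Fin 3, U J * G (J 0) (msOf J) := by
  rw [← sum_comp_perm (Equiv.swap 0 p) (fun J => U J * G (J 0) (msOf J))]
  apply Finset.sum_congr rfl
  intro J _
  simp only [Function.comp_apply, Equiv.swap_apply_left, hU (Equiv.swap 0 p) J, msOf_comp_perm]


lemma count_mul {k : ℕ} (J : Fin k → Fin 3) (i : Fin 3) (X : ℝ) :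
    ((Multiset.count i (msOf J) : ℕ) : ℝ) * X = ∑ t : Fin k, if J t = i then X else 0 := by
  rw [count_msOf, Finset.card_filter]
  push_cast
  rw [Finset.sum_mul]
  apply Finset.sum_congr rfl
  intro t _
  by_cases h : J t = i <;> simp [h]

lemma offdiag_count {k : ℕ} (J : Fin k → Fin 3) (H : Fin 3 → ℝ) :
    ∑ b : Fin 3, ((Multiset.count b (msOf J) : ℕ) : ℝ)
        * (((Multiset.count b (msOf J) : ℕ) : ℝ) - 1) * H b
      = ∑ p ∈ Finset.univ.offDiag,
          (if J p.1 = J p.2 then H (J p.1) else 0) := by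
  classical
  rw [← Finset.sum_fiberwise_of_maps_to
    (g := fun p : Fin k × Fin k => J p.1) (t := Finset.univ)
    (fun p _ => Finset.mem_univ _)
    (fun p => if J p.1 = J p.2 then H (J p.1) else 0)]
  apply Finset.sum_congr rfl
  intro b _
  have step1 : ∑ p ∈ Finset.univ.offDiag.filter (fun p => J p.1 = b),
      (if J p.1 = J p.2 then H (J p.1) else 0)
      = ∑ p ∈ Finset.univ.offDiag.filter (fun p => J p.1 = b),
      (if J p.2 = b then H b else 0) := by
    apply Finset.sum_congr rfl
    intro p hp
    rw [Finset.mem_filter] at hp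
    rw [hp.2]
    by_cases h2 : J p.2 = b
    · rw [if_pos h2.symm, if_pos h2]
    · rw [if_neg (fun hh => h2 hh.symm), if_neg h2]
  rw [step1, ← Finset.sum_filter]
  have hset : (Finset.univ.offDiag.filter (fun p : Fin k × Fin k => J p.1 = b)).filter
      (fun p => J p.2 = b) = (Finset.univ.filter (fun t => J t = b)).offDiag := by
    ext p
    simp only [Finset.mem_filter, Finset.mem_offDiag, Finset.mem_univ, true_and]
    tauto
  rw [hset, Finset.sum_const, Finset.offDiag_card, ← count_msOf, nsmul_eq_mul]
  rcases Nat.eq_zero_or_pos (Multiset.count b (msOf J)) with h0 | hpos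
  · simp [h0]
  · rw [Nat.cast_sub (Nat.le_mul_of_pos_left _ hpos)]
    push_cast
    ring


lemma sum_count {K : Multiset (Fin 3)} : ∑ b : Fin 3, Multiset.count b K = Multiset.card K := by
  induction K using Multiset.induction_on with
  | empty => simp
  | cons a s ih =>
    simp only [Multiset.count_cons, Multiset.card_cons, Finset.sum_add_distrib, ih]
    simp

section
variable {m : ℕ} {S : Tensor (m+1)}

lemma subE (hS : IsSym S) (hTF : IsTraceFree S) (i : Fin 3) (K : Multiset (Fin 3)) (hK : Multiset.card K = m) :
    ∑ a : Fin 3, ((Multiset.count i (a ::ₘ a ::ₘ K) : ℕ) : ℝ)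
        * Sms S ((a ::ₘ a ::ₘ K).erase i)
      = 2 * Sms S (i ::ₘ K) := by
  classical
  have h1 : ∀ a : Fin 3, ((Multiset.count i (a ::ₘ a ::ₘ K) : ℕ) : ℝ)
      * Sms S ((a ::ₘ a ::ₘ K).erase i)
      = ((Multiset.count i K : ℕ) : ℝ) * Sms S ((a ::ₘ a ::ₘ K).erase i)
        + (if a = i then 2 * Sms S (i ::ₘ K) else 0) := by
    intro a
    by_cases h : a = i
    · subst h
      rw [Multiset.count_cons_self, Multiset.count_cons_self, if_pos rfl,
        Multiset.erase_cons_head]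
      push_cast
      ring
    · rw [Multiset.count_cons_of_ne (Ne.symm h), Multiset.count_cons_of_ne (Ne.symm h),
        if_neg h, add_zero]
  rw [Finset.sum_congr rfl (fun a _ => h1 a), Finset.sum_add_distrib]
  rw [Finset.sum_ite_eq' Finset.univ i (fun _ => 2 * Sms S (i ::ₘ K))]
  rw [if_pos (Finset.mem_univ i), ← Finset.mul_sum]
  rcases Nat.eq_zero_or_pos (Multiset.count i K) with h0 | hpos
  · rw [h0]; push_cast; ring
  · have hiK : i ∈ K := Multiset.count_pos.mp hpos
    obtain ⟨K₀, rfl⟩ := Multiset.exists_cons_of_mem hiK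
    have herase : ∀ a : Fin 3, ((a ::ₘ a ::ₘ i ::ₘ K₀).erase i) = a ::ₘ a ::ₘ K₀ := by
      intro a
      by_cases h : a = i
      · subst h; rw [Multiset.erase_cons_head]
      · rw [Multiset.erase_cons_tail _ (by simp [h]), Multiset.erase_cons_tail _ (by simp [h]),
          Multiset.erase_cons_head]
    rw [Finset.sum_congr rfl (fun a _ => by rw [herase a])]
    rw [trace_Sms hS hTF K₀ (by simp at hK; omega)]
    ring

lemma subD (hS : IsSym S) (hTF : IsTraceFree S) (i : Fin 3) (K : Multiset (Fin 3))
    (hK : Multiset.card K = m) :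
    ∑ a : Fin 3, ∑ b : Fin 3,
        ((Multiset.count b (a ::ₘ a ::ₘ K) : ℕ) : ℝ)
          * (((Multiset.count b (a ::ₘ a ::ₘ K) : ℕ) : ℝ) - 1)
          * Sms S (i ::ₘ ((a ::ₘ a ::ₘ K).erase b).erase b)
      = (4 * (m : ℝ) + 6) * Sms S (i ::ₘ K) := by
  classical
  rw [Finset.sum_comm]
  have inner : ∀ b : Fin 3,
      ∑ a : Fin 3, ((Multiset.count b (a ::ₘ a ::ₘ K) : ℕ) : ℝ)
          * (((Multiset.count b (a ::ₘ a ::ₘ K) : ℕ) : ℝ) - 1)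
          * Sms S (i ::ₘ ((a ::ₘ a ::ₘ K).erase b).erase b)
      = (4 * ((Multiset.count b K : ℕ) : ℝ) + 2) * Sms S (i ::ₘ K) := by
    intro b
    have hsplit : ∀ a : Fin 3, ((Multiset.count b (a ::ₘ a ::ₘ K) : ℕ) : ℝ)
          * (((Multiset.count b (a ::ₘ a ::ₘ K) : ℕ) : ℝ) - 1)
          * Sms S (i ::ₘ ((a ::ₘ a ::ₘ K).erase b).erase b)
        = if a = b then ((Multiset.count b K : ℝ)+2) * ((Multiset.count b K : ℝ)+1) * Sms S (i ::ₘ K)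
          else (Multiset.count b K : ℝ) * ((Multiset.count b K : ℝ)-1)
            * Sms S (i ::ₘ a ::ₘ a ::ₘ (K.erase b).erase b) := by
      intro a
      by_cases h : a = b
      · subst h
        rw [if_pos rfl, Multiset.count_cons_self, Multiset.count_cons_self,
          Multiset.erase_cons_head, Multiset.erase_cons_head]
        push_cast; ring
      · rw [if_neg h, Multiset.count_cons_of_ne (Ne.symm h), Multiset.count_cons_of_ne (Ne.symm h),
          Multiset.erase_cons_tail _ (by exact h),
          Multiset.erase_cons_tail _ (by exact h),
          Multiset.erase_cons_tail _ (by exact h),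
          Multiset.erase_cons_tail _ (by exact h)]
    rw [Finset.sum_congr rfl (fun a _ => hsplit a)]
    rw [← Finset.add_sum_erase Finset.univ _ (Finset.mem_univ b), if_pos rfl]
    have herase : ∀ a ∈ Finset.univ.erase b,
        (if a = b then ((Multiset.count b K : ℝ)+2) * ((Multiset.count b K : ℝ)+1)
            * Sms S (i ::ₘ K)
          else (Multiset.count b K : ℝ) * ((Multiset.count b K : ℝ)-1)
            * Sms S (i ::ₘ a ::ₘ a ::ₘ (K.erase b).erase b))
        = (Multiset.count b K : ℝ) * ((Multiset.count b K : ℝ)-1)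
            * Sms S (i ::ₘ a ::ₘ a ::ₘ (K.erase b).erase b) := by
      intro a ha
      rw [if_neg (Finset.ne_of_mem_erase ha)]
    rw [Finset.sum_congr rfl herase, ← Finset.mul_sum]
    by_cases hd2 : 2 ≤ Multiset.count b K
    · obtain ⟨K₁, hK₁⟩ : ∃ K₁, K = b ::ₘ b ::ₘ K₁ := by
        have h1 : Multiset.replicate 2 b ≤ K :=
          (Multiset.le_count_iff_replicate_le).mp hd2
        obtain ⟨u, hu⟩ := Multiset.le_iff_exists_add.mp h1
        exact ⟨u, by simpa [Multiset.replicate_succ] using hu⟩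
      have hC : (K.erase b).erase b = K₁ := by
        rw [hK₁, Multiset.erase_cons_head, Multiset.erase_cons_head]
      rw [hC]
      have hswap : ∀ a : Fin 3, i ::ₘ a ::ₘ a ::ₘ K₁ = a ::ₘ a ::ₘ i ::ₘ K₁ := by
        intro a
        rw [Multiset.cons_swap i a, Multiset.cons_swap i a]
      have hsum0 : ∑ a : Fin 3, Sms S (i ::ₘ a ::ₘ a ::ₘ K₁) = 0 := by
        rw [Finset.sum_congr rfl (fun a _ => by rw [hswap a])]
        apply trace_Sms hS hTF
        have : Multiset.card K = Multiset.card K₁ + 2 := by rw [hK₁]; simp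
        simp only [Multiset.card_cons]
        omega
      rw [Finset.sum_erase_eq_sub (Finset.mem_univ b), hsum0]
      have hib : i ::ₘ b ::ₘ b ::ₘ K₁ = i ::ₘ K := by rw [hK₁]
      rw [hib]
      ring
    · have h0 : (Multiset.count b K : ℝ) * ((Multiset.count b K : ℝ) - 1) = 0 := by
        interval_cases h : Multiset.count b K <;> norm_num
      linear_combination (Sms S (i ::ₘ K)
        + ∑ a ∈ Finset.univ.erase b, Sms S (i ::ₘ a ::ₘ a ::ₘ (K.erase b).erase b)) * h0
  rw [Finset.sum_congr rfl (fun b _ => inner b), ← Finset.sum_mul]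
  congr 1
  have hsum : ∑ b : Fin 3, ((Multiset.count b K : ℕ) : ℝ) = (m : ℝ) := by
    rw [← Nat.cast_sum, sum_count (K := K), hK]
  rw [Finset.sum_add_distrib, ← Finset.mul_sum, hsum]
  simp
  ring

end

lemma msOf_update {k : ℕ} (f : Fin (k+1) → Fin 3) (p : Fin (k+1)) (a : Fin 3) :
    msOf (Function.update f p a) = a ::ₘ msOf (f ∘ p.succAbove) := by
  rw [msOf_succAbove (Function.update f p a) p, Function.update_self]
  congr 2
  funext j
  exact Function.update_of_ne (Fin.succAbove_ne p j) _ _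

lemma exists_update2 {k : ℕ} (J : Fin (k+2) → Fin 3) (p q : Fin (k+2)) (h : p ≠ q) :
    ∃ g : Fin k → Fin 3, ∀ a : Fin 3,
      msOf (Function.update (Function.update J p a) q a) = a ::ₘ a ::ₘ msOf g := by
  obtain ⟨q', hq'⟩ := Fin.exists_succAbove_eq (Ne.symm h)
  refine ⟨(J ∘ p.succAbove) ∘ q'.succAbove, fun a => ?_⟩
  rw [Function.update_comm h, msOf_update]
  have hcomp : (Function.update J q a) ∘ p.succAbove
      = Function.update (J ∘ p.succAbove) q' a := by
    funext j
    by_cases hj : j = q'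
    · subst hj
      rw [Function.comp_apply, hq', Function.update_self, Function.update_self]
    · have hne : p.succAbove j ≠ q := by
        rw [← hq']
        exact fun hh => hj (Fin.succAbove_right_injective hh)
      rw [Function.comp_apply, Function.update_of_ne hne, Function.update_of_ne hj]
      rfl
  rw [hcomp, msOf_update]

noncomputable def Zt (m : ℕ) (i : Fin 3) (S : Tensor (m+1)) : Tensor (m+2) := fun J =>
  (1/((m:ℝ)+2)) * (((Multiset.count i (msOf J) : ℕ) : ℝ) * Sms S ((msOf J).erase i))
  - (1/(((m:ℝ)+2)*(2*(m:ℝ)+3))) * ∑ b : Fin 3,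
      ((Multiset.count b (msOf J) : ℕ) : ℝ) * (((Multiset.count b (msOf J) : ℕ) : ℝ) - 1)
        * Sms S (i ::ₘ ((msOf J).erase b).erase b)

lemma Zt_sym (m : ℕ) (i : Fin 3) (S : Tensor (m+1)) : IsSym (Zt m i S) := by
  intro σ J
  unfold Zt
  rw [msOf_comp_perm]

lemma Zt_tf (m : ℕ) (i : Fin 3) {S : Tensor (m+1)} (hS : IsSym S) (hTF : IsTraceFree S) :
    IsTraceFree (Zt m i S) := by
  intro p q hpq J
  obtain ⟨g, hg⟩ := exists_update2 J p q hpq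
  simp only [Zt, hg]
  rw [Finset.sum_sub_distrib, ← Finset.mul_sum, ← Finset.mul_sum]
  rw [subE hS hTF i (msOf g) (card_msOf g), subD hS hTF i (msOf g) (card_msOf g)]
  have h1 : ((m:ℝ)+2) ≠ 0 := by positivity
  have h2 : (2*(m:ℝ)+3) ≠ 0 := by positivity
  field_simp
  ring


variable {m : ℕ} {S : Tensor (m+1)} {U : Tensor (m+2)}

lemma evalE (hS : IsSym S) (hU : IsSym U) (i : Fin 3) :
    ∑ J : Fin (m+2) → Fin 3,
        U J * (((Multiset.count i (msOf J) : ℕ) : ℝ) * Sms S ((msOf J).erase i))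
      = ((m:ℝ)+2) * ∑ L : Fin (m+1) → Fin 3, U (Fin.cons i L) * S L := by
  classical
  have step1 : ∀ J : Fin (m+2) → Fin 3,
      U J * (((Multiset.count i (msOf J) : ℕ) : ℝ) * Sms S ((msOf J).erase i))
      = ∑ t : Fin (m+2), U J * (if J t = i then Sms S ((msOf J).erase i) else 0) := by
    intro J
    rw [count_mul J i (Sms S ((msOf J).erase i)), Finset.mul_sum]
  rw [Finset.sum_congr rfl (fun J _ => step1 J), Finset.sum_comm]
  have step2 : ∀ t : Fin (m+2),
      ∑ J : Fin (m+2) → Fin 3, U J * (if J t = i then Sms S ((msOf J).erase i) else 0)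
      = ∑ J : Fin (m+2) → Fin 3, U J * (if J 0 = i then Sms S ((msOf J).erase i) else 0) :=
    fun t => sum_single_reindex hU t (fun a M => if a = i then Sms S (M.erase i) else 0)
  rw [Finset.sum_congr rfl (fun t _ => step2 t), Finset.sum_const, Finset.card_univ,
    Fintype.card_fin, nsmul_eq_mul]
  have step3 : ∑ J : Fin (m+2) → Fin 3, U J * (if J 0 = i then Sms S ((msOf J).erase i) else 0)
      = ∑ L : Fin (m+1) → Fin 3, U (Fin.cons i L) * S L := by
    rw [sum_split (fun J => U J * (if J 0 = i then Sms S ((msOf J).erase i) else 0))]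
    have inner : ∀ a : Fin 3, ∑ L : Fin (m+1) → Fin 3,
        U (Fin.cons a L) * (if (Fin.cons a L : Fin (m+2) → Fin 3) 0 = i
            then Sms S ((msOf (Fin.cons a L)).erase i) else 0)
        = if a = i then ∑ L : Fin (m+1) → Fin 3, U (Fin.cons i L) * S L else 0 := by
      intro a
      by_cases h : a = i
      · subst h
        rw [if_pos rfl]
        apply Finset.sum_congr rfl
        intro L _
        rw [Fin.cons_zero, if_pos rfl, msOf_cons, Multiset.erase_cons_head, Sms_msOf hS]
      · rw [if_neg h]
        apply Finset.sum_eq_zero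
        intro L _
        rw [Fin.cons_zero, if_neg h, mul_zero]
    rw [Finset.sum_congr rfl (fun a _ => inner a), Finset.sum_ite_eq' Finset.univ i
      (fun _ => ∑ L : Fin (m+1) → Fin 3, U (Fin.cons i L) * S L), if_pos (Finset.mem_univ i)]
  rw [step3]
  push_cast
  ring

lemma evalD (hS : IsSym S) (hU : IsSym U) (i : Fin 3) :
    ∑ J : Fin (m+2) → Fin 3,
        U J * (∑ b : Fin 3, ((Multiset.count b (msOf J) : ℕ) : ℝ)
          * (((Multiset.count b (msOf J) : ℕ) : ℝ) - 1)
          * Sms S (i ::ₘ ((msOf J).erase b).erase b))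
      = ((m:ℝ)+2) * ((m:ℝ)+1) * ∑ L : Fin m → Fin 3, ∑ a : Fin 3,
          U (Fin.cons a (Fin.cons a L)) * Sms S (i ::ₘ msOf L) := by
  classical
  set G : Fin 3 → Fin 3 → Multiset (Fin 3) → ℝ :=
    fun a b M => if a = b then Sms S (i ::ₘ (M.erase a).erase b) else 0 with hG
  have step0 : ∀ J : Fin (m+2) → Fin 3,
      U J * (∑ b : Fin 3, ((Multiset.count b (msOf J) : ℕ) : ℝ)
          * (((Multiset.count b (msOf J) : ℕ) : ℝ) - 1)
          * Sms S (i ::ₘ ((msOf J).erase b).erase b))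
      = ∑ p ∈ Finset.univ.offDiag, U J * G (J p.1) (J p.2) (msOf J) := by
    intro J
    rw [offdiag_count J (fun b => Sms S (i ::ₘ ((msOf J).erase b).erase b)), Finset.mul_sum]
    apply Finset.sum_congr rfl
    intro p _
    congr 1
    simp only [hG]
    by_cases h : J p.1 = J p.2
    · rw [if_pos h, if_pos h, ← h]
    · rw [if_neg h, if_neg h]
  rw [Finset.sum_congr rfl (fun J _ => step0 J), Finset.sum_comm]
  have step1 : ∀ p ∈ (Finset.univ : Finset (Fin (m+2))).offDiag,
      ∑ J : Fin (m+2) → Fin 3, U J * G (J p.1) (J p.2) (msOf J)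
      = ∑ J : Fin (m+2) → Fin 3, U J * G (J 0) (J 1) (msOf J) := by
    intro p hp
    exact sum_pair_reindex hU (Finset.mem_offDiag.mp hp).2.2 G
  rw [Finset.sum_congr rfl step1, Finset.sum_const]
  have hcard : (Finset.univ : Finset (Fin (m+2))).offDiag.card = (m+2)*(m+2) - (m+2) := by
    rw [Finset.offDiag_card, Finset.card_univ, Fintype.card_fin]
  rw [hcard, nsmul_eq_mul]
  have hcast : (((m+2)*(m+2) - (m+2) : ℕ) : ℝ) = ((m:ℝ)+2) * ((m:ℝ)+1) := by
    rw [Nat.cast_sub (Nat.le_mul_of_pos_left _ (by omega))]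
    push_cast
    ring
  rw [hcast]
  congr 1
  rw [sum_split (fun J => U J * G (J 0) (J 1) (msOf J))]
  have inner : ∀ a : Fin 3, ∑ L' : Fin (m+1) → Fin 3,
      U (Fin.cons a L') * G ((Fin.cons a L' : Fin (m+2) → Fin 3) 0)
          ((Fin.cons a L' : Fin (m+2) → Fin 3) 1) (msOf (Fin.cons a L'))
      = ∑ L : Fin m → Fin 3, U (Fin.cons a (Fin.cons a L)) * Sms S (i ::ₘ msOf L) := by
    intro a
    rw [sum_split (fun L' => U (Fin.cons a L')
      * G ((Fin.cons a L' : Fin (m+2) → Fin 3) 0)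
          ((Fin.cons a L' : Fin (m+2) → Fin 3) 1) (msOf (Fin.cons a L')))]
    have inner2 : ∀ b : Fin 3, ∑ L : Fin m → Fin 3,
        U (Fin.cons a (Fin.cons b L))
          * G ((Fin.cons a (Fin.cons b L) : Fin (m+2) → Fin 3) 0)
            ((Fin.cons a (Fin.cons b L) : Fin (m+2) → Fin 3) 1)
            (msOf (Fin.cons a (Fin.cons b L)))
        = if a = b then ∑ L : Fin m → Fin 3,
            U (Fin.cons a (Fin.cons a L)) * Sms S (i ::ₘ msOf L) else 0 := by
      intro b
      have h1 : ∀ L : Fin m → Fin 3, (Fin.cons a (Fin.cons b L) : Fin (m+2) → Fin 3) 1 = b := by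
        intro L
        rw [← Fin.succ_zero_eq_one, Fin.cons_succ, Fin.cons_zero]
      by_cases h : a = b
      · subst h
        rw [if_pos rfl]
        apply Finset.sum_congr rfl
        intro L _
        rw [Fin.cons_zero, h1 L]
        simp only [hG, ite_true, eq_self_iff_true]
        rw [msOf_cons, msOf_cons, Multiset.erase_cons_head, Multiset.erase_cons_head]
      · rw [if_neg h]
        apply Finset.sum_eq_zero
        intro L _
        rw [Fin.cons_zero, h1 L]
        simp only [hG]
        rw [if_neg h, mul_zero]
    rw [Finset.sum_congr rfl (fun b _ => inner2 b), Finset.sum_ite_eq Finset.univ a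
      (fun _ => ∑ L : Fin m → Fin 3, U (Fin.cons a (Fin.cons a L)) * Sms S (i ::ₘ msOf L)),
      if_pos (Finset.mem_univ a)]
  rw [Finset.sum_congr rfl (fun a _ => inner a), Finset.sum_comm]


lemma vecPow_sym (n : Fin 3 → ℝ) (k : ℕ) : IsSym (vecPow n k) := by
  intro σ I
  exact Equiv.prod_comp σ (fun j => n (I j))

lemma vecPow_cons (n : Fin 3 → ℝ) {k : ℕ} (a : Fin 3) (L : Fin k → Fin 3) :
    vecPow n (k+1) (Fin.cons a L) = n a * vecPow n k L := by
  unfold vecPow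
  rw [Fin.prod_univ_succ, Fin.cons_zero]
  simp only [Fin.cons_succ]

lemma trace_cons_zero {k : ℕ} {T : Tensor (k+2)} (hT : IsTraceFree T) (L : Fin k → Fin 3) :
    ∑ a : Fin 3, T (Fin.cons a (Fin.cons a L)) = 0 := by
  have h01 : (0 : Fin (k+2)) ≠ 1 := by simp [Fin.ext_iff]
  have := hT 0 1 h01 (Fin.cons 0 (Fin.cons 0 L))
  simpa only [update_update_cons] using this

lemma sum_Zt {m : ℕ} (i : Fin 3) {S : Tensor (m+1)} {U : Tensor (m+2)}
    (hS : IsSym S) (hU : IsSym U) :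
    ∑ J : Fin (m+2) → Fin 3, U J * Zt m i S J
      = (1/((m:ℝ)+2)) * (((m:ℝ)+2) * ∑ L : Fin (m+1) → Fin 3, U (Fin.cons i L) * S L)
        - (1/(((m:ℝ)+2)*(2*(m:ℝ)+3))) * (((m:ℝ)+2) * ((m:ℝ)+1)
            * ∑ L : Fin m → Fin 3, ∑ a : Fin 3,
                U (Fin.cons a (Fin.cons a L)) * Sms S (i ::ₘ msOf L)) := by
  rw [← evalE hS hU i, ← evalD hS hU i, Finset.mul_sum, Finset.mul_sum,
    ← Finset.sum_sub_distrib]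
  apply Finset.sum_congr rfl
  intro J _
  unfold Zt
  ring

lemma key_eval (m : ℕ) (n : Fin 3 → ℝ) (hn : ∑ a, n a ^ 2 = 1) (i : Fin 3)
    (Thi : Tensor (m + 2)) (hThi : IsSTFPartOf Thi (vecPow n (m + 2)))
    {X : Tensor (m+1)} (hX : IsSTF X) :
    ∑ L : Fin (m+1) → Fin 3, Thi (Fin.cons i L) * X L
      = n i * (∑ L : Fin (m+1) → Fin 3, vecPow n (m+1) L * X L)
        - (((m:ℝ)+1)/(2*(m:ℝ)+3))
            * ∑ L0 : Fin m → Fin 3, vecPow n m L0 * X (Fin.cons i L0) := by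
  have hZ : IsSTF (Zt m i X) := ⟨Zt_sym m i X, Zt_tf m i hX.1 hX.2⟩
  have horth := hThi.2 _ hZ
  unfold tInner at horth
  have horth' : ∑ J : Fin (m+2) → Fin 3, vecPow n (m+2) J * Zt m i X J
      = ∑ J : Fin (m+2) → Fin 3, Thi J * Zt m i X J := by
    rw [← sub_eq_zero, ← Finset.sum_sub_distrib]
    simpa only [Pi.sub_apply, sub_mul] using horth
  have hThiSide : ∑ J : Fin (m+2) → Fin 3, Thi J * Zt m i X J
      = ∑ L : Fin (m+1) → Fin 3, Thi (Fin.cons i L) * X L := by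
    rw [sum_Zt i hX.1 hThi.1.1]
    have hz : ∀ L : Fin m → Fin 3,
        ∑ a : Fin 3, Thi (Fin.cons a (Fin.cons a L)) * Sms X (i ::ₘ msOf L) = 0 := by
      intro L
      rw [← Finset.sum_mul, trace_cons_zero hThi.1.2 L, zero_mul]
    rw [Finset.sum_congr rfl (fun L _ => hz L)]
    simp only [Finset.sum_const, smul_zero, mul_zero, sub_zero]
    have hm2 : ((m:ℝ)+2) ≠ 0 := by positivity
    field_simp
  have hPowSide : ∑ J : Fin (m+2) → Fin 3, vecPow n (m+2) J * Zt m i X J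
      = n i * (∑ L : Fin (m+1) → Fin 3, vecPow n (m+1) L * X L)
        - (((m:ℝ)+1)/(2*(m:ℝ)+3))
            * ∑ L0 : Fin m → Fin 3, vecPow n m L0 * X (Fin.cons i L0) := by
    rw [sum_Zt i hX.1 (vecPow_sym n (m+2))]
    have hE : ∑ L : Fin (m+1) → Fin 3, vecPow n (m+2) (Fin.cons i L) * X L
        = n i * ∑ L : Fin (m+1) → Fin 3, vecPow n (m+1) L * X L := by
      rw [Finset.mul_sum]
      apply Finset.sum_congr rfl
      intro L _
      rw [vecPow_cons, mul_assoc]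
    have hD : ∀ L0 : Fin m → Fin 3,
        ∑ a : Fin 3, vecPow n (m+2) (Fin.cons a (Fin.cons a L0)) * Sms X (i ::ₘ msOf L0)
        = vecPow n m L0 * X (Fin.cons i L0) := by
      intro L0
      have hsms : Sms X (i ::ₘ msOf L0) = X (Fin.cons i L0) := by
        rw [← msOf_cons, Sms_msOf hX.1]
      have hterm : ∀ a : Fin 3,
          vecPow n (m+2) (Fin.cons a (Fin.cons a L0)) * Sms X (i ::ₘ msOf L0)
          = n a ^ 2 * (vecPow n m L0 * X (Fin.cons i L0)) := by
        intro a
        rw [vecPow_cons, vecPow_cons, hsms]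
        ring
      rw [Finset.sum_congr rfl (fun a _ => hterm a), ← Finset.sum_mul, hn, one_mul]
    rw [hE, Finset.sum_congr rfl (fun L0 _ => hD L0)]
    have hm2 : ((m:ℝ)+2) ≠ 0 := by positivity
    have hm3 : (2*(m:ℝ)+3) ≠ 0 := by positivity
    field_simp
  rw [← hThiSide, ← horth', hPowSide]

end STF5

open STF5

theorem stmt5 (m : ℕ) (n : Fin 3 → ℝ) (hn : ∑ i, n i ^ 2 = 1) (i : Fin 3)
    -- `l = m + 1 ≥ 1`
    (Thi : Tensor (m + 2)) (hThi : IsSTFPartOf Thi (vecPow n (m + 2)))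
    (Tl : Tensor (m + 1)) (hTl : IsSTFPartOf Tl (vecPow n (m + 1)))
    (Tlo : Tensor m) (hTlo : IsSTFPartOf Tlo (vecPow n m))
    -- `W` is the STF part (over the indices `a₁ … a_l`) of `δ_{i a₁} n̂_{a₂…a_l}`
    (W : Tensor (m + 1))
    (hW : IsSTFPartOf W
      (fun I : Fin (m + 1) → Fin 3 =>
        (if I 0 = i then (1 : ℝ) else 0) * Tlo (fun j : Fin m => I j.succ))) :
    ∀ I : Fin (m + 1) → Fin 3,
      n i * Tl I = Thi (Fin.cons i I) + ((m : ℝ) + 1) / (2 * (m + 1) + 1) * W I := by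
  classical
  set c : ℝ := ((m:ℝ)+1)/(2*(m:ℝ)+3) with hc
  set X : Tensor (m+1) := fun I => n i * Tl I - Thi (Fin.cons i I) - c * W I with hXdef
  have hXsym : IsSym X := by
    intro σ I
    simp only [hXdef]
    rw [hTl.1.1 σ I, hW.1.1 σ I,
      sym_eq_of_msOf hThi.1.1 (f := Fin.cons i (I ∘ σ)) (g := Fin.cons i I)
        (by rw [msOf_cons, msOf_cons, msOf_comp_perm])]
  have hXtf : IsTraceFree X := by
    intro p q hpq I
    have hc1 : ∀ a : Fin 3, X (Function.update (Function.update I p a) q a)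
        = n i * Tl (Function.update (Function.update I p a) q a)
          - Thi (Function.update (Function.update (Fin.cons i I) p.succ a) q.succ a)
          - c * W (Function.update (Function.update I p a) q a) := by
      intro a
      simp only [hXdef]
      rw [Fin.cons_update, Fin.cons_update]
    rw [Finset.sum_congr rfl (fun a _ => hc1 a), Finset.sum_sub_distrib,
      Finset.sum_sub_distrib, ← Finset.mul_sum, ← Finset.mul_sum,
      hTl.1.2 p q hpq I, hW.1.2 p q hpq I,
      hThi.1.2 p.succ q.succ (fun h => hpq (Fin.succ_injective _ h)) (Fin.cons i I)]
    ring
  have hXstf : IsSTF X := ⟨hXsym, hXtf⟩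
  have hRsym : IsSym (fun L0 : Fin m → Fin 3 => X (Fin.cons i L0)) := by
    intro τ L0
    exact sym_eq_of_msOf hXsym (by rw [msOf_cons, msOf_cons, msOf_comp_perm])
  have hRtf : IsTraceFree (fun L0 : Fin m → Fin 3 => X (Fin.cons i L0)) := by
    intro p q hpq L0
    have hc1 : ∀ a : Fin 3, X (Fin.cons i (Function.update (Function.update L0 p a) q a))
        = X (Function.update (Function.update (Fin.cons i L0) p.succ a) q.succ a) := by
      intro a
      rw [Fin.cons_update, Fin.cons_update]
    rw [Finset.sum_congr rfl (fun a _ => hc1 a)]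
    exact hXtf p.succ q.succ (fun h => hpq (Fin.succ_injective _ h)) (Fin.cons i L0)
  have hP : ∑ I : Fin (m+1) → Fin 3, Tl I * X I
      = ∑ I : Fin (m+1) → Fin 3, vecPow n (m+1) I * X I := by
    have h := hTl.2 X hXstf
    unfold tInner at h
    have h2 : (∑ I : Fin (m+1) → Fin 3, vecPow n (m+1) I * X I)
        - ∑ I : Fin (m+1) → Fin 3, Tl I * X I = 0 := by
      rw [← Finset.sum_sub_distrib]
      simpa only [Pi.sub_apply, sub_mul] using h
    linarith
  have hDW : ∑ I : Fin (m+1) → Fin 3,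
        ((if I 0 = i then (1:ℝ) else 0) * Tlo (fun j : Fin m => I j.succ)) * X I
      = ∑ I : Fin (m+1) → Fin 3, W I * X I := by
    have h := hW.2 X hXstf
    unfold tInner at h
    have h2 : (∑ I : Fin (m+1) → Fin 3,
          ((if I 0 = i then (1:ℝ) else 0) * Tlo (fun j : Fin m => I j.succ)) * X I)
        - ∑ I : Fin (m+1) → Fin 3, W I * X I = 0 := by
      rw [← Finset.sum_sub_distrib]
      simpa only [Pi.sub_apply, sub_mul] using h
    linarith
  have hDval : ∑ I : Fin (m+1) → Fin 3,
        ((if I 0 = i then (1:ℝ) else 0) * Tlo (fun j : Fin m => I j.succ)) * X I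
      = ∑ L0 : Fin m → Fin 3, Tlo L0 * X (Fin.cons i L0) := by
    rw [sum_split (fun I => ((if I 0 = i then (1:ℝ) else 0)
      * Tlo (fun j : Fin m => I j.succ)) * X I)]
    have inner : ∀ a : Fin 3,
        (∑ L0 : Fin m → Fin 3, ((if (Fin.cons a L0 : Fin (m+1) → Fin 3) 0 = i then (1:ℝ) else 0)
          * Tlo (fun j : Fin m => (Fin.cons a L0 : Fin (m+1) → Fin 3) j.succ))
            * X (Fin.cons a L0))
        = if a = i then ∑ L0 : Fin m → Fin 3, Tlo L0 * X (Fin.cons i L0) else 0 := by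
      intro a
      have htail : ∀ L0 : Fin m → Fin 3,
          (fun j : Fin m => (Fin.cons a L0 : Fin (m+1) → Fin 3) j.succ) = L0 := by
        intro L0
        funext j
        exact @Fin.cons_succ m (fun _ => Fin 3) a L0 j
      by_cases h : a = i
      · subst h
        rw [if_pos rfl]
        apply Finset.sum_congr rfl
        intro L0 _
        rw [Fin.cons_zero, if_pos rfl, htail L0, one_mul]
      · rw [if_neg h]
        apply Finset.sum_eq_zero
        intro L0 _
        rw [Fin.cons_zero, if_neg h, zero_mul, zero_mul]
    rw [Finset.sum_congr rfl (fun a _ => inner a),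
      Finset.sum_ite_eq' Finset.univ i
        (fun _ => ∑ L0 : Fin m → Fin 3, Tlo L0 * X (Fin.cons i L0)),
      if_pos (Finset.mem_univ i)]
  have hTloval : ∑ L0 : Fin m → Fin 3, Tlo L0 * X (Fin.cons i L0)
      = ∑ L0 : Fin m → Fin 3, vecPow n m L0 * X (Fin.cons i L0) := by
    have h := hTlo.2 _ ⟨hRsym, hRtf⟩
    unfold tInner at h
    have h2 : (∑ L0 : Fin m → Fin 3, vecPow n m L0 * X (Fin.cons i L0))
        - ∑ L0 : Fin m → Fin 3, Tlo L0 * X (Fin.cons i L0) = 0 := by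
      rw [← Finset.sum_sub_distrib]
      simpa only [Pi.sub_apply, sub_mul] using h
    linarith
  have hbig := key_eval m n hn i Thi hThi hXstf
  have hXX : ∑ I : Fin (m+1) → Fin 3, X I * X I = 0 := by
    have expand : ∀ I : Fin (m+1) → Fin 3, X I * X I
        = n i * (Tl I * X I) - Thi (Fin.cons i I) * X I - c * (W I * X I) := by
      intro I
      simp only [hXdef]
      ring
    rw [Finset.sum_congr rfl (fun I _ => expand I), Finset.sum_sub_distrib,
      Finset.sum_sub_distrib, ← Finset.mul_sum, ← Finset.mul_sum,
      hP, hbig, ← hDW, hDval, hTloval]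
    ring
  have hzero : ∀ I : Fin (m+1) → Fin 3, X I = 0 := by
    intro I
    have h := (Finset.sum_eq_zero_iff_of_nonneg
      (fun I _ => mul_self_nonneg (X I))).mp hXX I (Finset.mem_univ I)
    exact mul_self_eq_zero.mp h
  intro I
  have h := hzero I
  simp only [hXdef] at h
  have hCc : ((m : ℝ) + 1) / (2 * ((m:ℝ) + 1) + 1) = c := by
    rw [hc, show (2 : ℝ) * ((m:ℝ) + 1) + 1 = 2 * (m:ℝ) + 3 by ring]
  rw [hCc]
  linarith [h]
end

section
/- Let f : (0,∞) → ℝ be smooth, and on ℝ³ \ {0} set r = |x|, n = x/r. Then for every l ∈ ℕ, the STF part of the l-fold partial derivative of f(r) satisfies ∂̂_L f(r) = n̂_L · r^l · ((r⁻¹ d/dr)^l f)(r), where (r⁻¹ d/dr)^l denotes the l-fold composition of the operator g ↦ r⁻¹ g'. -/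
open scoped Nat

noncomputable section

abbrev E3 := EuclideanSpace ℝ (Fin 3)

/-- The operator `g ↦ r⁻¹ g'`. -/
def radDeriv (g : ℝ → ℝ) : ℝ → ℝ := fun r => deriv g r / r

open scoped RealInnerProductSpace

lemma isSTF_sub {l : ℕ} {A B : Tensor l} (hA : IsSTF A) (hB : IsSTF B) : IsSTF (A - B) := by
  constructor
  · intro σ I
    simp [Pi.sub_apply, hA.1 σ I, hB.1 σ I]
  · intro p q hpq I
    simp only [Pi.sub_apply, Finset.sum_sub_distrib, hA.2 p q hpq I, hB.2 p q hpq I, sub_zero]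

lemma isSTF_mul_const {l : ℕ} {A : Tensor l} (hA : IsSTF A) (c : ℝ) :
    IsSTF (fun I => A I * c) := by
  constructor
  · intro σ I
    simp [hA.1 σ I]
  · intro p q hpq I
    simp only [← Finset.sum_mul, hA.2 p q hpq I, zero_mul]

lemma tInner_sub_left {l : ℕ} (A B S : Tensor l) :
    tInner (A - B) S = tInner A S - tInner B S := by
  simp [tInner, Finset.sum_sub_distrib, sub_mul]

lemma stfPart_unique {l : ℕ} {A B T : Tensor l} (hA : IsSTFPartOf A T)
    (hB : IsSTFPartOf B T) : A = B := by
  have hAB : IsSTF (A - B) := isSTF_sub hA.1 hB.1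
  have h0 : tInner (A - B) (A - B) = 0 := by
    have h1 := hA.2 (A - B) hAB
    have h2 := hB.2 (A - B) hAB
    have : tInner (A - B) (A - B) = tInner (T - B) (A - B) - tInner (T - A) (A - B) := by
      rw [← tInner_sub_left]
      congr 1
      abel
    rw [this, h1, h2, sub_zero]
  funext I
  have hsq : ∀ J ∈ Finset.univ, (0:ℝ) ≤ (A - B) J * (A - B) J := fun J _ => mul_self_nonneg _
  have := (Finset.sum_eq_zero_iff_of_nonneg hsq).1 h0 I (Finset.mem_univ I)
  have : (A - B) I = 0 := by nlinarith [this]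
  simpa [Pi.sub_apply, sub_eq_zero] using this

lemma cons_stf {l : ℕ} {S : Tensor (l+1)} (hS : IsSTF S) (i : Fin 3) :
    IsSTF (fun K => S (Fin.cons i K)) := by
  constructor
  · intro σ K
    have hτ : (Fin.cons i K : Fin (l+1) → Fin 3) ∘ (Equiv.Perm.decomposeFin.symm (0, σ))
        = Fin.cons i (K ∘ σ) := by
      funext m
      refine Fin.cases ?_ (fun j => ?_) m
      · simp
      · simp [Equiv.Perm.decomposeFin_symm_apply_succ]
    have := hS.1 (Equiv.Perm.decomposeFin.symm (0, σ)) (Fin.cons i K)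
    rw [hτ] at this
    exact this
  · intro p q hpq K
    have key : ∀ a : Fin 3, Fin.cons i (Function.update (Function.update K p a) q a)
        = Function.update (Function.update (Fin.cons i K : Fin (l+1) → Fin 3) p.succ a) q.succ a := by
      intro a
      funext m
      refine Fin.cases ?_ (fun m' => ?_) m
      · rw [Function.update_of_ne (Ne.symm (Fin.succ_ne_zero q)),
          Function.update_of_ne (Ne.symm (Fin.succ_ne_zero p))]
        simp
      · simp only [Fin.cons_succ]
        by_cases hmq : m' = q
        · subst hmq; rw [Function.update_self, Function.update_self]
        · rw [Function.update_of_ne (fun hh => hmq (Fin.succ_injective _ hh)),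
            Function.update_of_ne hmq]
          by_cases hmp : m' = p
          · subst hmp; rw [Function.update_self, Function.update_self]
          · rw [Function.update_of_ne (fun hh => hmp (Fin.succ_injective _ hh)),
              Function.update_of_ne hmp]
            simp
    simp only [key]
    exact hS.2 p.succ q.succ (fun h => hpq (Fin.succ_injective _ h)) (Fin.cons i K)

lemma cons_trace_zero {l : ℕ} {S : Tensor (l+1)} (hS : IsTraceFree S) (j : Fin l)
    (x : Fin 3 → ℝ) :
    ∑ K : Fin l → Fin 3, S (Fin.cons (K j) K) * ∏ j' ∈ Finset.univ.erase j, x (K j') = 0 := by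
  classical
  rw [← (Equiv.funSplitAt j (Fin 3)).symm.sum_comp]
  rw [Fintype.sum_prod_type]
  rw [Finset.sum_comm]
  refine Finset.sum_eq_zero fun h _ => ?_
  -- h : {j' // j' ≠ j} → Fin 3
  set K0 : Fin l → Fin 3 := (Equiv.funSplitAt j (Fin 3)).symm (0, h) with hK0
  have hKa : ∀ a : Fin 3, (Equiv.funSplitAt j (Fin 3)).symm (a, h)
      = Function.update K0 j a := by
    intro a
    funext m
    by_cases hm : m = j
    · subst hm; simp [K0, Equiv.funSplitAt, Equiv.piSplitAt]
    · simp [K0, Equiv.funSplitAt, Equiv.piSplitAt, hm, Function.update_of_ne hm]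
  have hprod : ∀ a : Fin 3,
      (∏ j' ∈ Finset.univ.erase j, x ((Function.update K0 j a) j'))
        = ∏ j' ∈ Finset.univ.erase j, x (K0 j') := by
    intro a
    refine Finset.prod_congr rfl fun j' hj' => ?_
    rw [Function.update_of_ne (Finset.ne_of_mem_erase hj')]
  have hcons : ∀ a : Fin 3, (Fin.cons ((Function.update K0 j a) j) (Function.update K0 j a)
      : Fin (l+1) → Fin 3)
      = Function.update (Function.update (Fin.cons (K0 j) K0) 0 a) j.succ a := by
    intro a
    funext m
    refine Fin.cases ?_ (fun m' => ?_) m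
    · rw [Function.update_of_ne (Ne.symm (Fin.succ_ne_zero j)), Function.update_self]
      simp
    · by_cases hm : m' = j
      · subst hm
        rw [Function.update_self]
        simp
      · rw [Function.update_of_ne (fun hh => hm (Fin.succ_injective _ hh)),
          Function.update_of_ne (Fin.succ_ne_zero m')]
        simp [Fin.cons_succ, Function.update_of_ne hm]
  simp only [hKa, hprod, hcons, ← Finset.sum_mul]
  rw [hS 0 j.succ (Ne.symm (Fin.succ_ne_zero j)) (Fin.cons (K0 j) K0), zero_mul]

lemma normHasFDerivAt {x : E3} (hx : x ≠ 0) :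
    HasFDerivAt (fun y : E3 => ‖y‖) (‖x‖⁻¹ • innerSL ℝ x) x := by
  have hinner : HasFDerivAt (fun y : E3 => ⟪y, y⟫)
      ((fderivInnerCLM ℝ (x, x)).comp ((ContinuousLinearMap.id ℝ E3).prod
        (ContinuousLinearMap.id ℝ E3))) x :=
    (hasFDerivAt_id x).inner ℝ (hasFDerivAt_id x)
  have hne : ⟪x, x⟫ ≠ 0 := by
    rw [real_inner_self_eq_norm_mul_norm]
    exact mul_ne_zero (norm_ne_zero_iff.2 hx) (norm_ne_zero_iff.2 hx)
  have hsqrt : HasFDerivAt (fun y : E3 => Real.sqrt ⟪y, y⟫)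
      ((1 / (2 * Real.sqrt ⟪x, x⟫)) • ((fderivInnerCLM ℝ (x, x)).comp
        ((ContinuousLinearMap.id ℝ E3).prod (ContinuousLinearMap.id ℝ E3)))) x :=
    HasDerivAt.comp_hasFDerivAt (f := fun y : E3 => ⟪y, y⟫) x (Real.hasDerivAt_sqrt hne) hinner
  have hfun : (fun y : E3 => Real.sqrt ⟪y, y⟫) = fun y : E3 => ‖y‖ := by
    funext y
    rw [norm_eq_sqrt_real_inner]
  rw [hfun] at hsqrt
  refine hsqrt.congr_fderiv ?_
  ext v
  have h1 : Real.sqrt ⟪x, x⟫ = ‖x‖ := (norm_eq_sqrt_real_inner x).symm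
  simp only [ContinuousLinearMap.coe_smul', Pi.smul_apply, ContinuousLinearMap.coe_comp',
    Function.comp_apply, ContinuousLinearMap.prod_apply, ContinuousLinearMap.coe_id', id_eq,
    fderivInnerCLM_apply, innerSL_apply_apply, h1, smul_eq_mul]
  rw [real_inner_comm v x]
  have hnorm : ‖x‖ ≠ 0 := norm_ne_zero_iff.2 hx
  field_simp
  ring

lemma radDeriv_iterate_contDiffOn {f : ℝ → ℝ} (hf : ContDiffOn ℝ (⊤:ℕ∞) f (Set.Ioi 0)) :
    ∀ k : ℕ, ContDiffOn ℝ (⊤:ℕ∞) (radDeriv^[k] f) (Set.Ioi 0) := by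
  intro k
  induction k with
  | zero => simpa using hf
  | succ k ih =>
    rw [Function.iterate_succ_apply']
    have hderiv : ContDiffOn ℝ (⊤:ℕ∞) (deriv (radDeriv^[k] f)) (Set.Ioi 0) :=
      ih.deriv_of_isOpen isOpen_Ioi (le_of_eq (ENat.coe_top_add_one))
    have : ContDiffOn ℝ (⊤:ℕ∞) (fun r => deriv (radDeriv^[k] f) r / r) (Set.Ioi 0) :=
      hderiv.div contDiffOn_id (fun r hr => ne_of_gt hr)
    exact this

lemma radDeriv_iterate_hasDerivAt {f : ℝ → ℝ} (hf : ContDiffOn ℝ (⊤:ℕ∞) f (Set.Ioi 0))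
    (k : ℕ) {r : ℝ} (hr : 0 < r) :
    HasDerivAt (radDeriv^[k] f) (deriv (radDeriv^[k] f) r) r := by
  have h := (radDeriv_iterate_contDiffOn hf k).contDiffAt (Ioi_mem_nhds hr)
  exact (h.differentiableAt (by simp)).hasDerivAt

lemma reindex_sum {l : ℕ} (Φfn : (Fin (l+1) → Fin 3) → ℝ) :
    ∑ I : Fin (l+1) → Fin 3, Φfn I
      = ∑ i : Fin 3, ∑ K : Fin l → Fin 3, Φfn (Fin.cons i K) := by
  rw [← Equiv.sum_comp (Fin.consEquiv (fun _ : Fin (l+1) => Fin 3)) Φfn, Fintype.sum_prod_type]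
  rfl

lemma key_s7 {f : ℝ → ℝ} (hf : ContDiffOn ℝ (⊤:ℕ∞) f (Set.Ioi 0)) :
    ∀ (l : ℕ) (S : Tensor l), IsSTF S → ∀ x : E3, x ≠ 0 →
      ∑ I : Fin l → Fin 3, S I *
        iteratedFDerivWithin ℝ l (fun y : E3 => f ‖y‖) {y : E3 | y ≠ 0} x
          (fun j => EuclideanSpace.single (I j) 1)
      = (∑ I : Fin l → Fin 3, S I * ∏ j, x (I j)) * (radDeriv^[l] f) ‖x‖ := by
  have hU : IsOpen {y : E3 | y ≠ 0} := isOpen_ne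
  have hFsm : ContDiffOn ℝ (⊤:ℕ∞) (fun y : E3 => f ‖y‖) {y : E3 | y ≠ 0} :=
    hf.comp (fun y hy => (contDiffAt_norm ℝ hy).contDiffWithinAt)
      (fun y hy => norm_pos_iff.2 hy)
  intro l
  induction l with
  | zero =>
    intro S hS x hx
    simp [iteratedFDerivWithin_zero_apply]
  | succ l ih =>
    intro S hS x hx
    have hr : (0:ℝ) < ‖x‖ := norm_pos_iff.2 hx
    have hrne : ‖x‖ ≠ 0 := ne_of_gt hr
    set g : ℝ → ℝ := radDeriv^[l] f with hg
    -- differentiability of the l-th derivative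
    have hdiff : DifferentiableWithinAt ℝ
        (iteratedFDerivWithin ℝ l (fun y : E3 => f ‖y‖) {y : E3 | y ≠ 0})
        {y : E3 | y ≠ 0} x :=
      (hFsm.differentiableOn_iteratedFDerivWithin
        (by exact_mod_cast ENat.coe_lt_top l) hU.uniqueDiffOn) x hx
    set c' := fderivWithin ℝ
      (iteratedFDerivWithin ℝ l (fun y : E3 => f ‖y‖) {y : E3 | y ≠ 0}) {y : E3 | y ≠ 0} x
      with hc'def
    have hc' : HasFDerivWithinAt
        (iteratedFDerivWithin ℝ l (fun y : E3 => f ‖y‖) {y : E3 | y ≠ 0}) c'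
        {y : E3 | y ≠ 0} x := hdiff.hasFDerivWithinAt
    -- peel off first derivative
    have hL : ∀ I : Fin (l+1) → Fin 3,
        iteratedFDerivWithin ℝ (l+1) (fun y : E3 => f ‖y‖) {y : E3 | y ≠ 0} x
          (fun j => EuclideanSpace.single (I j) 1)
        = (c' (EuclideanSpace.single (I 0) 1))
            (fun j : Fin l => EuclideanSpace.single (I j.succ) 1) := by
      intro I
      rw [iteratedFDerivWithin_succ_apply_left]
      rfl
    -- coordinate derivative
    have hcoord : ∀ m : Fin 3, HasFDerivAt (fun y : E3 => y m)
        (EuclideanSpace.proj m : E3 →L[ℝ] ℝ) x :=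
      fun m => (EuclideanSpace.proj (𝕜 := ℝ) m).hasFDerivAt
    -- per-direction analysis
    have main : ∀ i : Fin 3,
        (∑ K : Fin l → Fin 3, S (Fin.cons i K) •
          (c'.flipMultilinear (fun j : Fin l => EuclideanSpace.single (K j) 1)))
        = (∑ K : Fin l → Fin 3, S (Fin.cons i K) * ∏ j, x (K j)) •
            ((deriv g ‖x‖) • (‖x‖⁻¹ • innerSL ℝ x))
          + (g ‖x‖) • ∑ K : Fin l → Fin 3, S (Fin.cons i K) •
              (∑ j : Fin l, (∏ j' ∈ Finset.univ.erase j, x (K j')) •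
                (EuclideanSpace.proj (K j) : E3 →L[ℝ] ℝ)) := by
      intro i
      have hSi : IsSTF (fun K => S (Fin.cons i K)) := cons_stf hS i
      have hGi : HasFDerivWithinAt
          (fun y : E3 => ∑ K : Fin l → Fin 3, S (Fin.cons i K) *
            iteratedFDerivWithin ℝ l (fun y : E3 => f ‖y‖) {y : E3 | y ≠ 0} y
              (fun j => EuclideanSpace.single (K j) 1))
          (∑ K : Fin l → Fin 3, S (Fin.cons i K) •
            (c'.flipMultilinear (fun j : Fin l => EuclideanSpace.single (K j) 1)))
          {y : E3 | y ≠ 0} x :=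
        HasFDerivWithinAt.fun_sum fun K _ =>
          (hc'.continuousMultilinear_apply_const
            (fun j : Fin l => EuclideanSpace.single (K j) 1)).const_mul (S (Fin.cons i K))
      have hQi : HasFDerivAt
          (fun y : E3 => ∑ K : Fin l → Fin 3, S (Fin.cons i K) * ∏ j, y (K j))
          (∑ K : Fin l → Fin 3, S (Fin.cons i K) •
            (∑ j : Fin l, (∏ j' ∈ Finset.univ.erase j, x (K j')) •
              (EuclideanSpace.proj (K j) : E3 →L[ℝ] ℝ))) x :=
        HasFDerivAt.fun_sum fun K _ =>
          (HasFDerivAt.finset_prod (fun j _ => hcoord (K j))).const_mul (S (Fin.cons i K))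
      have hNg : HasFDerivAt (fun y : E3 => g ‖y‖)
          ((deriv g ‖x‖) • (‖x‖⁻¹ • innerSL ℝ x)) x :=
        HasDerivAt.comp_hasFDerivAt (f := fun y : E3 => ‖y‖) x
          (radDeriv_iterate_hasDerivAt hf l hr) (normHasFDerivAt hx)
      have hHi : HasFDerivAt
          (fun y : E3 => (∑ K : Fin l → Fin 3, S (Fin.cons i K) * ∏ j, y (K j)) * g ‖y‖)
          ((∑ K : Fin l → Fin 3, S (Fin.cons i K) * ∏ j, x (K j)) •
              ((deriv g ‖x‖) • (‖x‖⁻¹ • innerSL ℝ x))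
            + (g ‖x‖) • ∑ K : Fin l → Fin 3, S (Fin.cons i K) •
                (∑ j : Fin l, (∏ j' ∈ Finset.univ.erase j, x (K j')) •
                  (EuclideanSpace.proj (K j) : E3 →L[ℝ] ℝ))) x := hQi.mul hNg
      have heq : Set.EqOn
          (fun y : E3 => ∑ K : Fin l → Fin 3, S (Fin.cons i K) *
            iteratedFDerivWithin ℝ l (fun y : E3 => f ‖y‖) {y : E3 | y ≠ 0} y
              (fun j => EuclideanSpace.single (K j) 1))
          (fun y : E3 => (∑ K : Fin l → Fin 3, S (Fin.cons i K) * ∏ j, y (K j)) * g ‖y‖)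
          {y : E3 | y ≠ 0} := fun y hy => ih (fun K => S (Fin.cons i K)) hSi y hy
      have hGi' : HasFDerivAt
          (fun y : E3 => ∑ K : Fin l → Fin 3, S (Fin.cons i K) *
            iteratedFDerivWithin ℝ l (fun y : E3 => f ‖y‖) {y : E3 | y ≠ 0} y
              (fun j => EuclideanSpace.single (K j) 1)) _ x :=
        hHi.congr_of_eventuallyEq (Filter.eventuallyEq_of_mem (hU.mem_nhds hx) heq)
      exact (hU.uniqueDiffOn x hx).eq hGi hGi'.hasFDerivWithinAt
    -- assemble
    calc
      ∑ I : Fin (l+1) → Fin 3, S I *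
          iteratedFDerivWithin ℝ (l+1) (fun y : E3 => f ‖y‖) {y : E3 | y ≠ 0} x
            (fun j => EuclideanSpace.single (I j) 1)
        = ∑ i : Fin 3, ∑ K : Fin l → Fin 3, S (Fin.cons i K) *
            (c' (EuclideanSpace.single i 1))
              (fun j : Fin l => EuclideanSpace.single (K j) 1) := by
          simp only [hL]
          rw [reindex_sum]
          refine Finset.sum_congr rfl fun i _ => Finset.sum_congr rfl fun K _ => ?_
          simp [Fin.cons_zero, Fin.cons_succ]
      _ = ∑ i : Fin 3,
            (∑ K : Fin l → Fin 3, S (Fin.cons i K) •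
              (c'.flipMultilinear (fun j : Fin l => EuclideanSpace.single (K j) 1)))
            (EuclideanSpace.single i 1) := by
          congr 1
          funext i
          simp [ContinuousLinearMap.sum_apply, ContinuousLinearMap.smul_apply,
            ContinuousLinearMap.flipMultilinear_apply_apply, smul_eq_mul]
      _ = ∑ i : Fin 3,
            ((∑ K : Fin l → Fin 3, S (Fin.cons i K) * ∏ j, x (K j)) •
              ((deriv g ‖x‖) • (‖x‖⁻¹ • innerSL ℝ x))
            + (g ‖x‖) • ∑ K : Fin l → Fin 3, S (Fin.cons i K) •
                (∑ j : Fin l, (∏ j' ∈ Finset.univ.erase j, x (K j')) •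
                  (EuclideanSpace.proj (K j) : E3 →L[ℝ] ℝ)))
            (EuclideanSpace.single i 1) := by
          congr 1
          funext i
          rw [main i]
      _ = (∑ I : Fin (l+1) → Fin 3, S I * ∏ j, x (I j)) * (radDeriv^[l+1] f) ‖x‖ := by
          simp only [ContinuousLinearMap.add_apply, ContinuousLinearMap.smul_apply,
            ContinuousLinearMap.sum_apply, smul_eq_mul, innerSL_apply_apply,
            EuclideanSpace.inner_single_right, conj_trivial, one_mul]
          rw [Finset.sum_add_distrib]
          have h2 : (∑ i : Fin 3, g ‖x‖ * ∑ K : Fin l → Fin 3, S (Fin.cons i K) *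
              ∑ j : Fin l, (∏ j' ∈ Finset.univ.erase j, x (K j')) *
                (EuclideanSpace.proj (K j)) (EuclideanSpace.single i 1)) = 0 := by
            rw [← Finset.mul_sum]
            have : (∑ i : Fin 3, ∑ K : Fin l → Fin 3, S (Fin.cons i K) *
                ∑ j : Fin l, (∏ j' ∈ Finset.univ.erase j, x (K j')) *
                  (EuclideanSpace.proj (K j)) (EuclideanSpace.single i 1)) = 0 := by
              rw [Finset.sum_comm]
              have hKfix : ∀ K : Fin l → Fin 3,
                  (∑ i : Fin 3, S (Fin.cons i K) *
                    ∑ j : Fin l, (∏ j' ∈ Finset.univ.erase j, x (K j')) *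
                      (EuclideanSpace.proj (K j)) (EuclideanSpace.single i 1))
                  = ∑ j : Fin l, S (Fin.cons (K j) K) *
                      ∏ j' ∈ Finset.univ.erase j, x (K j') := by
                intro K
                simp only [Finset.mul_sum]
                rw [Finset.sum_comm]
                refine Finset.sum_congr rfl fun j _ => ?_
                simp [EuclideanSpace.single_apply, mul_ite, mul_one, mul_zero,
                  Finset.sum_ite_eq]
              rw [Finset.sum_congr rfl fun K _ => hKfix K]
              rw [Finset.sum_comm]
              refine Finset.sum_eq_zero fun j _ => ?_
              exact cons_trace_zero hS.2 j (fun m => x m)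
            rw [this, mul_zero]
          rw [h2, add_zero]
          rw [Function.iterate_succ_apply']
          rw [reindex_sum (fun I => S I * ∏ j : Fin (l+1), x (I j))]
          have hprod : ∀ (i : Fin 3) (K : Fin l → Fin 3),
              (∏ j : Fin (l+1), x ((Fin.cons i K : Fin (l+1) → Fin 3) j))
                = x i * ∏ j : Fin l, x (K j) := by
            intro i K
            rw [Fin.prod_univ_succ, Fin.cons_zero]
            refine congrArg _ (Finset.prod_congr rfl fun m _ => ?_)
            rw [Fin.cons_succ]
          rw [Finset.sum_mul]
          refine Finset.sum_congr rfl fun i _ => ?_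
          rw [Finset.sum_mul, Finset.sum_mul]
          refine Finset.sum_congr rfl fun K _ => ?_
          rw [hprod i K]
          show _ = _ * _ * (radDeriv (radDeriv^[l] f) ‖x‖)
          rw [show radDeriv (radDeriv^[l] f) ‖x‖ = deriv g ‖x‖ / ‖x‖ from rfl, div_eq_mul_inv]
          ring

theorem stmt7 (l : ℕ) (f : ℝ → ℝ) (hf : ContDiffOn ℝ (⊤ : ℕ∞) f (Set.Ioi 0))
    (Nl : E3 → Tensor l)
    (hNl : ∀ x : E3, x ≠ 0 → IsSTFPartOf (Nl x) (vecPow (fun i => x i / ‖x‖) l))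
    (x : E3) (hx : x ≠ 0) (That : Tensor l)
    (hThat : IsSTFPartOf That (fun I =>
      iteratedFDerivWithin ℝ l (fun y : E3 => f ‖y‖) {y : E3 | y ≠ 0} x
        (fun j => EuclideanSpace.single (I j) 1))) :
    ∀ I : Fin l → Fin 3,
      That I = Nl x I * ‖x‖ ^ l * (radDeriv^[l] f) ‖x‖ := by
  have hf' : ContDiffOn ℝ (⊤:ℕ∞) f (Set.Ioi 0) := hf.of_le (by simp)
  have hr : (0:ℝ) < ‖x‖ := norm_pos_iff.2 hx
  have hrne : ‖x‖ ≠ 0 := ne_of_gt hr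
  have hNlx := hNl x hx
  set c : ℝ := ‖x‖ ^ l * (radDeriv^[l] f) ‖x‖ with hc
  have hAstf : IsSTF (fun I => Nl x I * ‖x‖ ^ l * (radDeriv^[l] f) ‖x‖) := by
    have h := isSTF_mul_const hNlx.1 c
    have heq : (fun I => Nl x I * c) = fun I => Nl x I * ‖x‖ ^ l * (radDeriv^[l] f) ‖x‖ := by
      funext I; rw [hc, ← mul_assoc]
    rwa [heq] at h
  have hA : IsSTFPartOf (fun I => Nl x I * ‖x‖ ^ l * (radDeriv^[l] f) ‖x‖)
      (fun I => iteratedFDerivWithin ℝ l (fun y : E3 => f ‖y‖) {y : E3 | y ≠ 0} x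
        (fun j => EuclideanSpace.single (I j) 1)) := by
    refine ⟨hAstf, fun S hS => ?_⟩
    rw [tInner_sub_left]
    have hkey := key_s7 hf' l S hS x hx
    have hT : tInner (fun I => iteratedFDerivWithin ℝ l (fun y : E3 => f ‖y‖)
        {y : E3 | y ≠ 0} x (fun j => EuclideanSpace.single (I j) 1)) S
        = (∑ I : Fin l → Fin 3, S I * ∏ j, x (I j)) * (radDeriv^[l] f) ‖x‖ := by
      rw [tInner, ← hkey]
      exact Finset.sum_congr rfl fun I _ => mul_comm _ _
    have hNS : tInner (Nl x) S = tInner (vecPow (fun i => x i / ‖x‖) l) S := by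
      have h0 := hNlx.2 S hS
      rw [tInner_sub_left] at h0
      linarith
    have hvec : tInner (vecPow (fun i => x i / ‖x‖) l) S
        = (∑ I : Fin l → Fin 3, S I * ∏ j, x (I j)) * (‖x‖ ^ l)⁻¹ := by
      rw [tInner, Finset.sum_mul]
      refine Finset.sum_congr rfl fun I _ => ?_
      have : vecPow (fun i => x i / ‖x‖) l I = (∏ j, x (I j)) * (‖x‖ ^ l)⁻¹ := by
        rw [vecPow]
        rw [Finset.prod_div_distrib, Finset.prod_const, div_eq_mul_inv]
        congr 2
        simp
      rw [this]
      ring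
    have hAS : tInner (fun I => Nl x I * ‖x‖ ^ l * (radDeriv^[l] f) ‖x‖) S
        = tInner (Nl x) S * c := by
      rw [tInner, tInner, Finset.sum_mul]
      refine Finset.sum_congr rfl fun I _ => ?_
      rw [hc]; ring
    rw [hT, hAS, hNS, hvec, hc]
    field_simp
    ring
  have := stfPart_unique hThat hA
  intro I
  rw [this]

end
end

section
/- On ℝ³ \ {0}, for every λ ∈ ℂ and l ∈ ℕ, ∂̂_L r^λ = λ(λ−2)⋯(λ−2l+2) · n̂_L · r^{λ−l}. In particular, if λ is a nonnegative even integer strictly less than 2l, then ∂̂_L r^λ = 0. -/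
open scoped Nat

/-- A complex-valued rank-`l` Cartesian tensor on ℝ³. -/
abbrev CTensor (l : ℕ) := (Fin l → Fin 3) → ℂ

noncomputable def cInner {l : ℕ} (S T : CTensor l) : ℂ :=
  ∑ I : Fin l → Fin 3, S I * T I

def IsSymC {l : ℕ} (T : CTensor l) : Prop :=
  ∀ (σ : Equiv.Perm (Fin l)) (I : Fin l → Fin 3), T (I ∘ σ) = T I

def IsTraceFreeC {l : ℕ} (T : CTensor l) : Prop :=
  ∀ p q : Fin l, p ≠ q → ∀ I : Fin l → Fin 3,
    ∑ a : Fin 3, T (Function.update (Function.update I p a) q a) = 0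

def IsSTFC {l : ℕ} (T : CTensor l) : Prop := IsSymC T ∧ IsTraceFreeC T

def IsSTFPartOfC {l : ℕ} (That T : CTensor l) : Prop :=
  IsSTFC That ∧ ∀ S : CTensor l, IsSTFC S → cInner (T - That) S = 0

noncomputable section

namespace Stmt8Aux

def ee (i : Fin 3) : E3 := EuclideanSpace.single i 1

def nsq : E3 → ℝ := fun y => ∑ i, y i * y i

lemma nsq_eq (y : E3) : nsq y = ‖y‖ ^ 2 := by
  rw [EuclideanSpace.norm_eq, Real.sq_sqrt (by positivity)]
  simp [nsq, sq]

def nsqD (x : E3) : E3 →L[ℝ] ℝ :=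
  ∑ i, (x i • (EuclideanSpace.proj i : E3 →L[ℝ] ℝ) + x i • (EuclideanSpace.proj i : E3 →L[ℝ] ℝ))

lemma hasFDerivAt_nsq (x : E3) : HasFDerivAt nsq (nsqD x) x :=
  HasFDerivAt.fun_sum fun i _ =>
    ((EuclideanSpace.proj i : E3 →L[ℝ] ℝ).hasFDerivAt.mul
      (EuclideanSpace.proj i : E3 →L[ℝ] ℝ).hasFDerivAt)

lemma nsqD_apply (x : E3) (i : Fin 3) : nsqD x (ee i) = 2 * x i := by
  simp [nsqD, ee, ContinuousLinearMap.sum_apply, EuclideanSpace.single_apply]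
  simp [Finset.sum_add_distrib, Finset.sum_ite_eq]
  ring

def fpow (a : ℂ) : E3 → ℂ := fun y => ((‖y‖ : ℝ) : ℂ) ^ a

def gexp (a : ℂ) : E3 → ℂ := fun y => Complex.exp ((a / 2) * ((Real.log (nsq y) : ℝ) : ℂ))

lemma fpow_eq_gexp (a : ℂ) {y : E3} (hy : y ≠ 0) : fpow a y = gexp a y := by
  have hn : (0:ℝ) < ‖y‖ := norm_pos_iff.2 hy
  have : Real.log (nsq y) = 2 * Real.log ‖y‖ := by
    rw [nsq_eq, Real.log_pow]; push_cast; ring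
  rw [fpow, gexp, this, Complex.cpow_def_of_ne_zero (by exact_mod_cast hn.ne')]
  rw [← Complex.ofReal_log hn.le]
  push_cast
  ring_nf

lemma gexp_hasFDerivAt (a : ℂ) (x : E3) (hx : x ≠ 0) :
    HasFDerivAt (gexp a)
      (Complex.exp ((a / 2) * ((Real.log (nsq x) : ℝ) : ℂ)) •
        ((a / 2) • (Complex.ofRealCLM.comp ((nsq x)⁻¹ • nsqD x)))) x := by
  have hn : (0:ℝ) < ‖x‖ := norm_pos_iff.2 hx
  have hnsq : nsq x ≠ 0 := by
    rw [nsq_eq]; positivity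
  have h1 : HasFDerivAt (fun y => Real.log (nsq y)) ((nsq x)⁻¹ • nsqD x) x :=
    (Real.hasDerivAt_log hnsq).comp_hasFDerivAt x (hasFDerivAt_nsq x)
  have h2 : HasFDerivAt (fun y => ((Real.log (nsq y) : ℝ) : ℂ))
      (Complex.ofRealCLM.comp ((nsq x)⁻¹ • nsqD x)) x :=
    Complex.ofRealCLM.hasFDerivAt.comp x h1
  exact (h2.const_mul (a / 2)).cexp

lemma fpow_hasFDerivAt (a : ℂ) (x : E3) (hx : x ≠ 0) :
    ∃ D : E3 →L[ℝ] ℂ, HasFDerivAt (fpow a) D x ∧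
      ∀ i, D (ee i) = a * ((‖x‖ : ℝ) : ℂ) ^ (a - 2) * ((x i : ℝ) : ℂ) := by
  have hev : fpow a =ᶠ[nhds x] gexp a := by
    filter_upwards [IsOpen.mem_nhds (isOpen_compl_singleton) hx] with y hy
    exact fpow_eq_gexp a hy
  refine ⟨_, (gexp_hasFDerivAt a x hx).congr_of_eventuallyEq hev, fun i => ?_⟩
  have hn : (0:ℝ) < ‖x‖ := norm_pos_iff.2 hx
  have hcn : ((‖x‖ : ℝ) : ℂ) ≠ 0 := by exact_mod_cast hn.ne'
  have hval : Complex.exp ((a / 2) * ((Real.log (nsq x) : ℝ) : ℂ)) = ((‖x‖:ℝ):ℂ) ^ a :=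
    (fpow_eq_gexp a hx).symm
  have h2 : ((‖x‖:ℝ):ℂ) ^ (a - 2) = ((‖x‖:ℝ):ℂ) ^ a / ((‖x‖:ℝ):ℂ) ^ (2:ℂ) :=
    Complex.cpow_sub _ _ hcn
  have h3 : ((‖x‖:ℝ):ℂ) ^ (2:ℂ) = ((nsq x : ℝ) : ℂ) := by
    rw [show (2:ℂ) = ((2:ℕ):ℂ) by norm_num, Complex.cpow_natCast, nsq_eq]
    push_cast; ring
  have hnsq : ((nsq x :ℝ):ℂ) ≠ 0 := by
    have : nsq x ≠ 0 := by rw [nsq_eq]; positivity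
    exact_mod_cast this
  simp only [ContinuousLinearMap.smul_apply, ContinuousLinearMap.comp_apply,
    Complex.ofRealCLM_apply, ContinuousLinearMap.smul_apply, nsqD_apply, hval, h2, h3]
  field_simp
  push_cast [smul_eq_mul]
  linear_combination (((x i : ℝ) : ℂ) * a * ((‖x‖:ℝ):ℂ) ^ a) * mul_inv_cancel₀ hnsq

def U3 : Set E3 := {y : E3 | y ≠ 0}

lemma isOpen_U3 : IsOpen U3 := isOpen_compl_singleton

lemma contDiff_nsq : ContDiff ℝ (⊤ : ℕ∞) nsq :=
  ContDiff.sum fun i _ =>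
    ((EuclideanSpace.proj i : E3 →L[ℝ] ℝ).contDiff).mul
      ((EuclideanSpace.proj i : E3 →L[ℝ] ℝ).contDiff)

lemma fpow_contDiffOn (a : ℂ) (n : ℕ∞) : ContDiffOn ℝ n (fpow a) U3 := by
  intro x hx
  have hx' : x ≠ 0 := hx
  have hnsq : nsq x ≠ 0 := by
    have : (0:ℝ) < ‖x‖ := norm_pos_iff.2 hx'
    rw [nsq_eq]; positivity
  have h1 : ContDiffAt ℝ n (fun y => Real.log (nsq y)) x :=
    (Real.contDiffAt_log.2 hnsq).comp x ((contDiff_nsq).of_le (by simp)).contDiffAt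
  have h2 : ContDiffAt ℝ n (gexp a) x := by
    apply Complex.contDiff_exp.contDiffAt.comp
    exact (contDiffAt_const.mul (Complex.ofRealCLM.contDiff.contDiffAt.comp x h1))
  have h3 : ContDiffAt ℝ n (fpow a) x := by
    apply h2.congr_of_eventuallyEq
    filter_upwards [IsOpen.mem_nhds isOpen_compl_singleton hx'] with y hy
    exact fpow_eq_gexp a hy
  exact h3.contDiffWithinAt

lemma itderiv_diffAt (a : ℂ) (l : ℕ) (x : E3) (hx : x ≠ 0) :
    DifferentiableAt ℝ (iteratedFDeriv ℝ l (fpow a)) x := by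
  have hx' : x ∈ U3 := hx
  have h1 := (fpow_contDiffOn a (l + 1)).differentiableOn_iteratedFDerivWithin
    (m := l) (by exact_mod_cast lt_add_one l) isOpen_U3.uniqueDiffOn
  have h2 : DifferentiableAt ℝ (iteratedFDerivWithin ℝ l (fpow a) U3) x :=
    (h1 x hx').differentiableAt (isOpen_U3.mem_nhds hx')
  apply h2.congr_of_eventuallyEq
  filter_upwards [isOpen_U3.mem_nhds hx'] with y hy
  exact (iteratedFDerivWithin_of_isOpen l isOpen_U3 hy).symm

lemma sum_cons {M : Type*} [AddCommMonoid M] {l : ℕ} (F : (Fin (l+1) → Fin 3) → M) :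
    ∑ I : Fin (l+1) → Fin 3, F I = ∑ i : Fin 3, ∑ J : Fin l → Fin 3, F (Fin.cons i J) := by
  rw [← (Fin.consEquiv (fun _ : Fin (l+1) => Fin 3)).sum_comp F]
  rw [Fintype.sum_prod_type]
  rfl

lemma trace_cons_sum_zero {l : ℕ} (S : CTensor (l+1)) (hS : IsTraceFreeC S) (j : Fin l)
    (w : (Fin l → Fin 3) → ℂ) (hw : ∀ J a, w (Function.update J j a) = w J) :
    ∑ J : Fin l → Fin 3, S (Fin.cons (J j) J) * w J = 0 := by
  classical
  set e := Equiv.piSplitAt j (fun _ : Fin l => Fin 3) with he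
  rw [← e.symm.sum_comp (fun J => S (Fin.cons (J j) J) * w J), Fintype.sum_prod_type]
  have hupd : ∀ (g : {k // k ≠ j} → Fin 3) (a : Fin 3),
      e.symm (a, g) = Function.update (e.symm (0, g)) j a := by
    intro g a
    funext k
    by_cases hk : k = j
    · subst hk; simp [he, Equiv.piSplitAt]
    · simp [he, Equiv.piSplitAt, hk, Function.update_of_ne hk]
  rw [Finset.sum_comm]
  apply Finset.sum_eq_zero
  intro g _
  have hJ : ∀ a : Fin 3, (e.symm (a, g)) j = a := by
    intro a; simp [he, Equiv.piSplitAt]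
  calc ∑ a : Fin 3, S (Fin.cons ((e.symm (a, g)) j) (e.symm (a, g))) * w (e.symm (a, g))
      = ∑ a : Fin 3, S (Fin.cons a (Function.update (e.symm (0, g)) j a)) * w (e.symm (0, g)) := by
        apply Finset.sum_congr rfl
        intro a _
        rw [hJ, hupd, hw]
    _ = (∑ a : Fin 3, S (Fin.cons a (Function.update (e.symm (0, g)) j a))) * w (e.symm (0, g)) := by
        rw [Finset.sum_mul]
    _ = 0 := by
        rw [show (∑ a : Fin 3, S (Fin.cons a (Function.update (e.symm (0, g)) j a))) = 0 from ?_,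
          zero_mul]
        have h0 := hS 0 j.succ (Fin.succ_ne_zero j).symm (Fin.cons 0 (e.symm (0, g)))
        rw [← h0]
        apply Finset.sum_congr rfl
        intro a _
        congr 1
        rw [Fin.update_cons_zero, ← Fin.cons_update]

lemma key (l : ℕ) (μ : ℂ) (S : CTensor l) (hS : IsTraceFreeC S) (x : E3) (hx : x ≠ 0) :
    ∑ I : Fin l → Fin 3, S I * iteratedFDeriv ℝ l (fpow μ) x (fun j => ee (I j)) =
      (∏ j ∈ Finset.range l, (μ - 2 * j)) * ((‖x‖ : ℝ) : ℂ) ^ (μ - 2 * l) *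
        ∑ I : Fin l → Fin 3, S I * ∏ j, ((x (I j) : ℝ) : ℂ) := by
  induction l generalizing μ x with
  | zero =>
    simp [iteratedFDeriv_zero_apply, fpow]
    ring
  | succ l IH =>
    classical
    have hxU : x ∈ {y : E3 | y ≠ 0} := hx
    have hUopen : IsOpen {y : E3 | y ≠ 0} := isOpen_compl_singleton
    set C : ℂ := ∏ j ∈ Finset.range l, (μ - 2 * j) with hC
    set a : ℂ := μ - 2 * l with ha
    set T : Fin 3 → CTensor l := fun i J => S (Fin.cons i J) with hT
    have hTtf : ∀ i, IsTraceFreeC (T i) := by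
      intro i p q hpq J
      have h0 := hS p.succ q.succ (fun h => hpq (Fin.succ_injective _ h)) (Fin.cons i J)
      rw [← h0]
      apply Finset.sum_congr rfl
      intro b _
      simp only [hT]
      congr 1
      rw [Fin.cons_update, Fin.cons_update]
    -- the polynomial functions
    set Q : Fin 3 → E3 → ℂ := fun i y => ∑ J : Fin l → Fin 3, T i J * ∏ j, ((y (J j) : ℝ) : ℂ)
      with hQ
    -- left-peel the iterated derivative
    set A := fderiv ℝ (iteratedFDeriv ℝ l (fpow μ)) x with hA
    have hAd : HasFDerivAt (iteratedFDeriv ℝ l (fpow μ)) A x :=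
      (itderiv_diffAt μ l x hx).hasFDerivAt
    have hpeel : ∀ (i : Fin 3) (J : Fin l → Fin 3),
        iteratedFDeriv ℝ (l+1) (fpow μ) x (fun j => ee ((Fin.cons i J : Fin (l+1) → Fin 3) j)) =
          (A (ee i)) (fun j => ee (J j)) := by
      intro i J
      rw [iteratedFDeriv_succ_apply_left]
      rw [show (Fin.cons i J : Fin (l+1) → Fin 3) 0 = i from rfl]
      congr 1
    -- the derivative of the contracted l-th derivative
    have hg : ∀ i, HasFDerivAt
        (fun y => ∑ J : Fin l → Fin 3, T i J * iteratedFDeriv ℝ l (fpow μ) y (fun j => ee (J j)))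
        (∑ J : Fin l → Fin 3, T i J • (A.flipMultilinear (fun j => ee (J j)))) x :=
      fun i => HasFDerivAt.fun_sum fun J _ =>
        (hAd.continuousMultilinear_apply_const (fun j => ee (J j))).const_mul (T i J)
    -- derivative of fpow a
    obtain ⟨D, hD, hDval⟩ := fpow_hasFDerivAt a x hx
    -- derivative of Q i
    set Q' : Fin 3 → (E3 →L[ℝ] ℂ) := fun i =>
      ∑ J : Fin l → Fin 3, T i J • (∑ j : Fin l,
        (∏ k ∈ Finset.univ.erase j, ((x (J k) : ℝ) : ℂ)) •
          (Complex.ofRealCLM.comp (EuclideanSpace.proj (J j) : E3 →L[ℝ] ℝ))) with hQ'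
    have hQd : ∀ i, HasFDerivAt (Q i) (Q' i) x := by
      intro i
      apply HasFDerivAt.fun_sum
      intro J _
      apply HasFDerivAt.const_mul
      exact HasFDerivAt.finset_prod fun j _ =>
        (Complex.ofRealCLM.comp (EuclideanSpace.proj (J j) : E3 →L[ℝ] ℝ)).hasFDerivAt
    -- h i agrees with g i near x by induction hypothesis
    have hgh : ∀ i, fderiv ℝ
        (fun y => ∑ J : Fin l → Fin 3, T i J * iteratedFDeriv ℝ l (fpow μ) y (fun j => ee (J j))) x
        = fderiv ℝ (fun y => C * (fpow a y * Q i y)) x := by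
      intro i
      apply Filter.EventuallyEq.fderiv_eq
      filter_upwards [hUopen.mem_nhds hxU] with y hy
      rw [IH μ (T i) (hTtf i) y hy]
      simp only [hQ, fpow]
      ring
    -- value of the derivative of h i at ee i
    have hhd : ∀ i, HasFDerivAt (fun y => C * (fpow a y * Q i y))
        (C • (fpow a x • Q' i + Q i x • D)) x :=
      fun i => (hD.mul (hQd i)).const_mul C
    -- main pointwise identity
    have hmain : ∀ i, ∑ J : Fin l → Fin 3, T i J * ((A (ee i)) (fun j => ee (J j)))
        = C * (fpow a x * (Q' i (ee i)) + Q i x * (a * ((‖x‖:ℝ):ℂ) ^ (a - 2) * ((x i :ℝ):ℂ))) := by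
      intro i
      have h1 : ∑ J : Fin l → Fin 3, T i J * ((A (ee i)) (fun j => ee (J j)))
          = (∑ J : Fin l → Fin 3, T i J • (A.flipMultilinear (fun j => ee (J j)))) (ee i) := by
        simp [ContinuousLinearMap.sum_apply]
      rw [h1, ← (hg i).fderiv, hgh i, (hhd i).fderiv]
      simp only [ContinuousLinearMap.smul_apply, ContinuousLinearMap.add_apply, hDval i,
        smul_eq_mul]
    -- evaluate Q' i (ee i)
    have hQ'val : ∀ i, Q' i (ee i) = ∑ J : Fin l → Fin 3, T i J *
        ∑ j : Fin l, (∏ k ∈ Finset.univ.erase j, ((x (J k) : ℝ) : ℂ)) *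
          (if J j = i then 1 else 0) := by
      intro i
      simp only [hQ', ContinuousLinearMap.sum_apply, ContinuousLinearMap.smul_apply,
        ContinuousLinearMap.comp_apply, Complex.ofRealCLM_apply, smul_eq_mul]
      apply Finset.sum_congr rfl
      intro J _
      congr 1
      apply Finset.sum_congr rfl
      intro j _
      by_cases h : J j = i <;> simp [ee, EuclideanSpace.single_apply, h]
    -- the trace term vanishes
    have hw : ∀ (j : Fin l) (J : Fin l → Fin 3) (b : Fin 3),
        (∏ k ∈ Finset.univ.erase j, ((x (Function.update J j b k) : ℝ) : ℂ)) =
          ∏ k ∈ Finset.univ.erase j, ((x (J k) : ℝ) : ℂ) := by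
      intro j J b
      apply Finset.prod_congr rfl
      intro k hk
      rw [Function.update_of_ne (Finset.ne_of_mem_erase hk)]
    have hzero : ∑ i, Q' i (ee i) = 0 := by
      calc ∑ i, Q' i (ee i)
          = ∑ i, ∑ J : Fin l → Fin 3, ∑ j : Fin l, T i J *
              ((∏ k ∈ Finset.univ.erase j, ((x (J k) : ℝ) : ℂ)) *
                (if J j = i then 1 else 0)) := by
            apply Finset.sum_congr rfl
            intro i _
            rw [hQ'val i]
            apply Finset.sum_congr rfl
            intro J _
            rw [Finset.mul_sum]
        _ = ∑ J : Fin l → Fin 3, ∑ j : Fin l, ∑ i, T i J *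
              ((∏ k ∈ Finset.univ.erase j, ((x (J k) : ℝ) : ℂ)) *
                (if J j = i then 1 else 0)) := by
            rw [Finset.sum_comm]
            apply Finset.sum_congr rfl
            intro J _
            rw [Finset.sum_comm]
        _ = ∑ J : Fin l → Fin 3, ∑ j : Fin l, T (J j) J *
              (∏ k ∈ Finset.univ.erase j, ((x (J k) : ℝ) : ℂ)) := by
            apply Finset.sum_congr rfl
            intro J _
            apply Finset.sum_congr rfl
            intro j _
            simp [mul_ite, Finset.sum_ite_eq]
        _ = ∑ j : Fin l, ∑ J : Fin l → Fin 3, S (Fin.cons (J j) J) *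
              (∏ k ∈ Finset.univ.erase j, ((x (J k) : ℝ) : ℂ)) := by
            rw [Finset.sum_comm]
        _ = 0 := by
            apply Finset.sum_eq_zero
            intro j _
            exact trace_cons_sum_zero S hS j _ (fun J b => hw j J b)
    -- the main term
    have hP : ∑ i, ((x i : ℝ) : ℂ) * Q i x =
        ∑ I : Fin (l+1) → Fin 3, S I * ∏ j : Fin (l+1), ((x (I j) : ℝ) : ℂ) := by
      rw [sum_cons (fun I => S I * ∏ j : Fin (l+1), ((x (I j) : ℝ) : ℂ))]
      apply Finset.sum_congr rfl
      intro i _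
      simp only [hQ, Finset.mul_sum]
      apply Finset.sum_congr rfl
      intro J _
      have hcons : (fun j : Fin (l+1) => ((x ((Fin.cons i J : Fin (l+1) → Fin 3) j) : ℝ) : ℂ)) =
          Fin.cons ((x i : ℝ) : ℂ) (fun k => ((x (J k) : ℝ) : ℂ)) := by
        funext j
        refine Fin.cases ?_ ?_ j
        · rfl
        · intro k
          rw [Fin.cons_succ, Fin.cons_succ]
      rw [hcons, Fin.prod_cons, show T i J = S (Fin.cons i J) from rfl]
      ring
    -- assemble
    rw [sum_cons (fun I => S I * iteratedFDeriv ℝ (l+1) (fpow μ) x (fun j => ee (I j)))]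
    calc ∑ i, ∑ J : Fin l → Fin 3, S (Fin.cons i J) *
            iteratedFDeriv ℝ (l+1) (fpow μ) x (fun j => ee ((Fin.cons i J : Fin (l+1) → Fin 3) j))
        = ∑ i, ∑ J : Fin l → Fin 3, T i J * ((A (ee i)) (fun j => ee (J j))) := by
          apply Finset.sum_congr rfl
          intro i _
          apply Finset.sum_congr rfl
          intro J _
          rw [hpeel i J]
      _ = ∑ i, C * (fpow a x * (Q' i (ee i)) +
            Q i x * (a * ((‖x‖:ℝ):ℂ) ^ (a - 2) * ((x i :ℝ):ℂ))) := by
          exact Finset.sum_congr rfl fun i _ => hmain i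
      _ = C * fpow a x * (∑ i, Q' i (ee i)) +
            C * a * ((‖x‖:ℝ):ℂ) ^ (a - 2) * ∑ i, ((x i : ℝ):ℂ) * Q i x := by
          rw [Finset.mul_sum, Finset.mul_sum, ← Finset.sum_add_distrib]
          apply Finset.sum_congr rfl
          intro i _
          ring
      _ = (∏ j ∈ Finset.range (l+1), (μ - 2 * j)) * ((‖x‖ : ℝ) : ℂ) ^ (μ - 2 * (l+1 : ℕ)) *
            ∑ I : Fin (l+1) → Fin 3, S I * ∏ j : Fin (l+1), ((x (I j) : ℝ) : ℂ) := by
          rw [hzero, mul_zero, zero_add, hP, Finset.prod_range_succ]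
          have hexp : μ - 2 * ((l+1 : ℕ) : ℂ) = a - 2 := by push_cast; ring
          rw [hexp, ← hC]

end Stmt8Aux
open Stmt8Aux

lemma isSTF_re {l : ℕ} (S : CTensor l) (h : IsSTFC S) : IsSTF (fun I => (S I).re) := by
  constructor
  · intro σ I
    show (S (I ∘ σ)).re = (S I).re
    rw [h.1 σ I]
  · intro p q hpq I
    rw [← Complex.re_sum, h.2 p q hpq I, Complex.zero_re]

lemma isSTF_im {l : ℕ} (S : CTensor l) (h : IsSTFC S) : IsSTF (fun I => (S I).im) := by
  constructor
  · intro σ I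
    show (S (I ∘ σ)).im = (S I).im
    rw [h.1 σ I]
  · intro p q hpq I
    rw [← Complex.im_sum, h.2 p q hpq I, Complex.zero_im]

theorem stmt8' (l : ℕ) (lam : ℂ)
    (Nl : E3 → Tensor l)
    (hNl : ∀ x : E3, x ≠ 0 → IsSTFPartOf (Nl x) (vecPow (fun i => x i / ‖x‖) l))
    (x : E3) (hx : x ≠ 0) (That : CTensor l)
    (hThat : IsSTFPartOfC That (fun I =>
      iteratedFDerivWithin ℝ l (fun y : E3 => ((‖y‖ : ℂ)) ^ lam) {y : E3 | y ≠ 0} x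
        (fun j => EuclideanSpace.single (I j) 1))) :
    (∀ I : Fin l → Fin 3,
      That I = (∏ j ∈ Finset.range l, (lam - 2 * j)) * (Nl x I : ℂ) *
        (‖x‖ : ℂ) ^ (lam - l)) ∧
    (∀ k : ℕ, lam = 2 * k → 2 * k < 2 * l → ∀ I : Fin l → Fin 3, That I = 0) := by
  classical
  obtain ⟨hThatSTF, hThatOrth⟩ := hThat
  obtain ⟨hNlSTF, hNlOrth⟩ := hNl x hx
  set c : ℂ := ∏ j ∈ Finset.range l, (lam - 2 * j) with hc
  have hn0 : (0:ℝ) < ‖x‖ := norm_pos_iff.2 hx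
  have hcn : ((‖x‖:ℝ):ℂ) ≠ 0 := by exact_mod_cast hn0.ne'
  set D : CTensor l := fun I =>
    iteratedFDerivWithin ℝ l (fun y : E3 => ((‖y‖ : ℂ)) ^ lam) {y : E3 | y ≠ 0} x
      (fun j => EuclideanSpace.single (I j) 1) with hD
  have hDg : ∀ I, D I = iteratedFDeriv ℝ l (fpow lam) x (fun j => ee (I j)) := by
    intro I
    show (iteratedFDerivWithin ℝ l (fpow lam) U3 x) (fun j => ee (I j)) = _
    rw [iteratedFDerivWithin_of_isOpen l isOpen_U3 (show x ∈ U3 from hx)]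
  have hkey : ∀ S : CTensor l, IsTraceFreeC S →
      ∑ I, S I * D I = c * ((‖x‖:ℝ):ℂ) ^ (lam - 2 * l) *
        ∑ I, S I * ∏ j, ((x (I j) : ℝ) : ℂ) := by
    intro S hS
    rw [show ∑ I, S I * D I
        = ∑ I, S I * iteratedFDeriv ℝ l (fpow lam) x (fun j => ee (I j)) from
      Finset.sum_congr rfl fun I _ => by rw [hDg I]]
    exact key l lam S hS x hx
  set n : Fin 3 → ℝ := fun i => x i / ‖x‖ with hn
  set Tstar : CTensor l := fun I => c * ((Nl x I : ℝ):ℂ) * ((‖x‖:ℝ):ℂ) ^ (lam - l) with hTstar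
  -- replacing Nl by vecPow in contractions against complex STF tensors
  have hreal : ∀ S : CTensor l, IsSTFC S →
      ∑ I, S I * ((Nl x I : ℝ) : ℂ) = ∑ I, S I * ((vecPow n l I : ℝ) : ℂ) := by
    intro S hSstf
    set Sr : Tensor l := fun I => (S I).re with hSr
    set Si : Tensor l := fun I => (S I).im with hSi
    have h1 : ∑ I, (vecPow n l - Nl x) I * Sr I = 0 := hNlOrth Sr (isSTF_re S hSstf)
    have h2 : ∑ I, (vecPow n l - Nl x) I * Si I = 0 := hNlOrth Si (isSTF_im S hSstf)
    have hz : ∑ I, S I * ((vecPow n l I - Nl x I : ℝ) : ℂ) = 0 := by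
      have hsum : ∑ I, S I * ((vecPow n l I - Nl x I : ℝ) : ℂ)
          = ((∑ I, (vecPow n l - Nl x) I * Sr I : ℝ) : ℂ)
            + ((∑ I, (vecPow n l - Nl x) I * Si I : ℝ) : ℂ) * Complex.I := by
        push_cast
        rw [Finset.sum_mul, ← Finset.sum_add_distrib]
        apply Finset.sum_congr rfl
        intro I _
        rw [← Complex.re_add_im (S I)]
        simp only [Pi.sub_apply, hSr, hSi]
        push_cast
        ring
      rw [hsum, h1, h2]
      simp
    have hz2 : ∑ I, (S I * ((vecPow n l I : ℝ) : ℂ) - S I * ((Nl x I : ℝ) : ℂ)) = 0 := by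
      rw [← hz]
      apply Finset.sum_congr rfl
      intro I _
      push_cast
      ring
    rw [Finset.sum_sub_distrib] at hz2
    linear_combination -hz2
  have hTstarSTF : IsSTFC Tstar := by
    constructor
    · intro σ I
      simp only [hTstar]
      rw [hNlSTF.1 σ I]
    · intro p q hpq I
      have h0 := hNlSTF.2 p q hpq I
      have : ∑ a, Tstar (Function.update (Function.update I p a) q a)
          = (c * ((‖x‖:ℝ):ℂ) ^ (lam - l)) *
            ((∑ a, Nl x (Function.update (Function.update I p a) q a) : ℝ) : ℂ) := by
        push_cast
        rw [Finset.mul_sum]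
        apply Finset.sum_congr rfl
        intro a _
        simp only [hTstar]
        ring
      rw [this, h0]
      simp
  have hvec : ∀ I : Fin l → Fin 3, ((vecPow n l I : ℝ) : ℂ)
      = (∏ j, ((x (I j) : ℝ) : ℂ)) / ((‖x‖:ℝ):ℂ) ^ (l:ℕ) := by
    intro I
    show ((∏ j, n (I j) : ℝ) : ℂ) = _
    push_cast
    rw [show (fun j : Fin l => ((x (I j) / ‖x‖ : ℝ) : ℂ)) =
        fun j : Fin l => ((x (I j) : ℝ) : ℂ) / ((‖x‖:ℝ):ℂ) from funext fun j => by push_cast; rfl]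
    rw [Finset.prod_div_distrib, Finset.prod_const]
    simp
  have hpow : ((‖x‖:ℝ):ℂ) ^ (lam - l) / ((‖x‖:ℝ):ℂ) ^ (l:ℕ) = ((‖x‖:ℝ):ℂ) ^ (lam - 2 * l) := by
    rw [← Complex.cpow_natCast, ← Complex.cpow_sub _ _ hcn]
    congr 1
    push_cast
    ring
  have hTstarOrth : ∀ S : CTensor l, IsSTFC S → cInner (D - Tstar) S = 0 := by
    intro S hSstf
    have hkS := hkey S hSstf.2
    have hsplit : cInner (D - Tstar) S = ∑ I, S I * D I - ∑ I, S I * Tstar I := by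
      rw [cInner, ← Finset.sum_sub_distrib]
      apply Finset.sum_congr rfl
      intro I _
      simp only [Pi.sub_apply]
      ring
    have hTs : ∑ I, S I * Tstar I
        = c * ((‖x‖:ℝ):ℂ) ^ (lam - 2 * l) * ∑ I, S I * ∏ j, ((x (I j) : ℝ) : ℂ) := by
      have e1 : ∑ I, S I * Tstar I
          = c * ((‖x‖:ℝ):ℂ) ^ (lam - l) * ∑ I, S I * ((Nl x I : ℝ) : ℂ) := by
        rw [Finset.mul_sum]
        apply Finset.sum_congr rfl
        intro I _
        simp only [hTstar]
        ring
      rw [e1, hreal S hSstf, ← hpow]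
      rw [Finset.mul_sum, Finset.mul_sum]
      apply Finset.sum_congr rfl
      intro I _
      rw [hvec I]
      ring
    rw [hsplit, hkS, hTs, sub_self]
  -- uniqueness of the STF part
  set Ud : CTensor l := fun I => Tstar I - That I with hUd
  have hUdSTF : IsSTFC Ud := by
    constructor
    · intro σ I
      simp only [hUd]
      rw [hTstarSTF.1 σ I, hThatSTF.1 σ I]
    · intro p q hpq I
      simp only [hUd]
      rw [Finset.sum_sub_distrib, hTstarSTF.2 p q hpq I, hThatSTF.2 p q hpq I, sub_zero]
  have hUdOrth : ∀ S : CTensor l, IsSTFC S → ∑ I, Ud I * S I = 0 := by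
    intro S hSstf
    have h1 : cInner (D - That) S = 0 := hThatOrth S hSstf
    have h2 : cInner (D - Tstar) S = 0 := hTstarOrth S hSstf
    have h3 : cInner (D - That) S - cInner (D - Tstar) S = ∑ I, Ud I * S I := by
      rw [cInner, cInner, ← Finset.sum_sub_distrib]
      apply Finset.sum_congr rfl
      intro I _
      simp only [Pi.sub_apply, hUd]
      ring
    rw [h1, h2, sub_zero] at h3
    exact h3.symm ▸ rfl
  have hre : ∀ I, (Ud I).re = 0 := by
    have hS : IsSTFC (fun I => (((Ud I).re : ℝ) : ℂ)) := by
      constructor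
      · intro σ I
        show (((Ud (I ∘ σ)).re : ℝ) : ℂ) = (((Ud I).re : ℝ) : ℂ)
        rw [hUdSTF.1 σ I]
      · intro p q hpq I
        rw [show ∑ a, (((Ud (Function.update (Function.update I p a) q a)).re : ℝ) : ℂ)
            = (((∑ a, Ud (Function.update (Function.update I p a) q a)).re : ℝ) : ℂ) from by
          rw [Complex.re_sum]; push_cast; rfl]
        rw [hUdSTF.2 p q hpq I]
        simp
    have h0 := hUdOrth _ hS
    have hsq : ∑ I, ((Ud I).re) ^ 2 = 0 := by
      have := congrArg Complex.re h0
      rw [Complex.re_sum] at this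
      simpa [Complex.mul_re, sq] using this
    intro I
    have := (Finset.sum_eq_zero_iff_of_nonneg (fun I _ => sq_nonneg ((Ud I).re))).1 hsq I
      (Finset.mem_univ I)
    exact pow_eq_zero_iff two_ne_zero |>.1 this
  have him : ∀ I, (Ud I).im = 0 := by
    have hS : IsSTFC (fun I => (((Ud I).im : ℝ) : ℂ)) := by
      constructor
      · intro σ I
        show (((Ud (I ∘ σ)).im : ℝ) : ℂ) = (((Ud I).im : ℝ) : ℂ)
        rw [hUdSTF.1 σ I]
      · intro p q hpq I
        rw [show ∑ a, (((Ud (Function.update (Function.update I p a) q a)).im : ℝ) : ℂ)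
            = (((∑ a, Ud (Function.update (Function.update I p a) q a)).im : ℝ) : ℂ) from by
          rw [Complex.im_sum]; push_cast; rfl]
        rw [hUdSTF.2 p q hpq I]
        simp
    have h0 := hUdOrth _ hS
    have hsq : ∑ I, ((Ud I).im) ^ 2 = 0 := by
      have := congrArg Complex.im h0
      rw [Complex.im_sum] at this
      simpa [Complex.mul_im, sq, fun I => hre I] using this
    intro I
    have := (Finset.sum_eq_zero_iff_of_nonneg (fun I _ => sq_nonneg ((Ud I).im))).1 hsq I
      (Finset.mem_univ I)
    exact pow_eq_zero_iff two_ne_zero |>.1 this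
  have hTT : ∀ I, That I = Tstar I := by
    intro I
    have : Ud I = 0 := Complex.ext (hre I) (him I)
    have := sub_eq_zero.1 (show Tstar I - That I = 0 from this)
    exact this.symm
  constructor
  · intro I
    rw [hTT I]
  · intro k hk hkl I
    rw [hTT I]
    have hc0 : c = 0 := by
      apply Finset.prod_eq_zero (Finset.mem_range.2 (show k < l by omega))
      rw [hk]
      ring
    simp only [hTstar, hc0]
    ring


theorem stmt8 (l : ℕ) (lam : ℂ)
    (Nl : E3 → Tensor l)
    (hNl : ∀ x : E3, x ≠ 0 → IsSTFPartOf (Nl x) (vecPow (fun i => x i / ‖x‖) l))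
    (x : E3) (hx : x ≠ 0) (That : CTensor l)
    (hThat : IsSTFPartOfC That (fun I =>
      iteratedFDerivWithin ℝ l (fun y : E3 => ((‖y‖ : ℂ)) ^ lam) {y : E3 | y ≠ 0} x
        (fun j => EuclideanSpace.single (I j) 1))) :
    (∀ I : Fin l → Fin 3,
      That I = (∏ j ∈ Finset.range l, (lam - 2 * j)) * (Nl x I : ℂ) *
        (‖x‖ : ℂ) ^ (lam - l)) ∧
    (∀ k : ℕ, lam = 2 * k → 2 * k < 2 * l → ∀ I : Fin l → Fin 3, That I = 0) := by
  exact stmt8' l lam Nl hNl x hx That hThat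

end
end

section
/- For r > 0, i, k ∈ ℕ, and A ∈ ℂ with sufficiently large real part, ∫_{−r}^{r} (−s)^i · (d^k/dr^k evaluated as derivative in r of) ((s+r)^{A+l+n−i} / 2^{A+1+n−i+l−k}) ds = Σ_{j=0}^{i} (2^j i!/(i−j)!) (−r)^{i−j} d^k/dr^k [ Γ(A+l+n−i+1)/Γ(A+l+n−i+j+2) · r^{A+l+n−i+j+1} ], where on the left the k-fold r-derivative is applied to the integrand before integration. -/
/-!
The `k`-th derivative of `t ↦ (s + t) ^ w` is `w (w - 1) ⋯ (w - k + 1) (s + t) ^ (w - k)`, so after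
the substitution `u = s + r` the left side is a multiple of `∫₀^{2r} (r - u) ^ i u ^ (w - k) du`.
Integrating by parts `i` times evaluates this integral as a sum with coefficients
`Γ(m + 1) / Γ(m + j + 2)`, and `Γ(x + 1) = x (x - 1) ⋯ (x - k + 1) Γ(x - k + 1)` matches it termwise
with the `k`-th derivatives of the powers `t ^ (w + j + 1)` on the right.
-/

open Complex Polynomial Finset Set intervalIntegral

theorem hasDerivAt_ofReal_cpow_const_of_pos {x : ℝ} (hx : 0 < x) (w : ℂ) :
    HasDerivAt (fun t : ℝ => (t : ℂ) ^ w) (w * (x : ℂ) ^ (w - 1)) x := by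
  simpa using ((hasDerivAt_id (x : ℂ)).cpow_const (ofReal_mem_slitPlane.mpr hx)).comp_ofReal

theorem iteratedDeriv_ofReal_cpow_const {x : ℝ} (hx : 0 < x) (w : ℂ) (k : ℕ) :
    iteratedDeriv k (fun t : ℝ => (t : ℂ) ^ w) x =
      (descPochhammer ℂ k).eval w * (x : ℂ) ^ (w - k) := by
  induction k generalizing x with
  | zero => simp
  | succ k ih =>
    have hk : iteratedDeriv k (fun t : ℝ => (t : ℂ) ^ w) =ᶠ[nhds x]
        fun t : ℝ => (descPochhammer ℂ k).eval w * (t : ℂ) ^ (w - k) :=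
      Filter.eventually_of_mem (Ioi_mem_nhds hx) fun t ht => ih ht
    rw [iteratedDeriv_succ, hk.deriv_eq,
      ((hasDerivAt_ofReal_cpow_const_of_pos hx (w - k)).const_mul _).deriv,
      descPochhammer_succ_eval]
    push_cast
    ring_nf

theorem iteratedDeriv_ofReal_const_add_cpow {s x : ℝ} (hx : 0 < s + x) (w : ℂ) (k : ℕ) :
    iteratedDeriv k (fun t : ℝ => ((s + t : ℝ) : ℂ) ^ w) x =
      (descPochhammer ℂ k).eval w * ((s + x : ℝ) : ℂ) ^ (w - k) :=
  congrFun (iteratedDeriv_comp_const_add k (fun u : ℝ => (u : ℂ) ^ w) s) x ▸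
    iteratedDeriv_ofReal_cpow_const hx w k

theorem Gamma_add_one_eq_descPochhammer_mul {w : ℂ} (k : ℕ) (hw : 0 < (w - k + 1).re) :
    Gamma (w + 1) = (descPochhammer ℂ k).eval w * Gamma (w - k + 1) := by
  have hne : ∀ m : ℕ, w - k + 1 ≠ -m := by
    intro m h
    have := congrArg re h
    simp only [add_re, sub_re, natCast_re, one_re, neg_re] at this hw
    linarith [m.cast_nonneg (α := ℝ)]
  have hratio := Gamma_add_nat_div_Gamma_eq (n := k) (w - k + 1) hne
  rw [descPochhammer_eval_eq_ascPochhammer, ← hratio,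
    div_mul_cancel₀ _ (Gamma_ne_zero_of_re_pos hw)]
  ring_nf

theorem integral_sub_pow_succ_mul_cpow (b : ℝ) (c : ℂ) (i : ℕ) {m : ℂ} (hm : -1 < m.re) :
    ∫ u in (0 : ℝ)..b, (c - u) ^ (i + 1) * (u : ℂ) ^ m =
      (c - b) ^ (i + 1) * ((b : ℂ) ^ (m + 1) / (m + 1)) +
        (i + 1) / (m + 1) * ∫ u in (0 : ℝ)..b, (c - u) ^ i * (u : ℂ) ^ (m + 1) := by
  have hm1 : 0 < (m + 1).re := by simp only [add_re, one_re]; linarith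
  have hm1_ne : m + 1 ≠ 0 := fun h => by simp [h] at hm1
  have hu : ∀ x : ℝ, HasDerivAt (fun u : ℝ => (c - u) ^ (i + 1)) (-(i + 1) * (c - x) ^ i) x := by
    intro x
    have h := (((hasDerivAt_id (x : ℂ)).const_sub c).fun_pow (i + 1)).comp_ofReal
    simp only [id, Nat.add_sub_cancel] at h
    convert h using 1
    push_cast
    ring
  have hv : ∀ x ∈ Ioo (min 0 b) (max 0 b),
      HasDerivWithinAt (fun u : ℝ => (u : ℂ) ^ (m + 1) / (m + 1)) ((x : ℂ) ^ m) (Ioi x) x := by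
    intro x hx
    have hx0 : x ≠ 0 := by
      rcases le_total 0 b with h | h <;> simp [h] at hx <;> grind
    exact (hasDerivAt_ofReal_cpow_const' hx0 fun h => by simp [h] at hm).hasDerivWithinAt
  rw [integral_mul_deriv_eq_deriv_mul_of_hasDeriv_right
      (fun x _ => (hu x).continuousAt.continuousWithinAt)
      ((continuous_ofReal_cpow_const hm1).div_const _).continuousOn
      (fun x _ => (hu x).hasDerivWithinAt) hv
      ((continuous_const.mul ((continuous_const.sub continuous_ofReal).pow i)).intervalIntegrable
        _ _)
      (intervalIntegrable_cpow' hm)]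
  have hpull : ∫ x in (0 : ℝ)..b, -(i + 1 : ℂ) * (c - x) ^ i * ((x : ℂ) ^ (m + 1) / (m + 1)) =
      -((i + 1) / (m + 1)) * ∫ u in (0 : ℝ)..b, (c - u) ^ i * (u : ℂ) ^ (m + 1) := by
    rw [← integral_const_mul]
    exact integral_congr fun x _ => by ring
  rw [hpull, ofReal_zero, zero_cpow hm1_ne]
  ring

theorem integral_sub_pow_mul_cpow (b : ℝ) (c : ℂ) (i : ℕ) {m : ℂ} (hm : -1 < m.re) :
    ∫ u in (0 : ℝ)..b, (c - u) ^ i * (u : ℂ) ^ m =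
      ∑ j ∈ range (i + 1), (i.factorial : ℂ) / ((i - j).factorial : ℂ) * (c - b) ^ (i - j) *
        (Gamma (m + 1) / Gamma (m + j + 2)) * (b : ℂ) ^ (m + j + 1) := by
  have hm_succ : ∀ {m : ℂ}, -1 < m.re → -1 < (m + 1).re := fun hm => by
    simp only [add_re, one_re]; linarith
  have hm_ne : ∀ {m : ℂ}, -1 < m.re → m + 1 ≠ 0 := fun hm h => by
    simp [eq_neg_of_add_eq_zero_left h] at hm
  have hGamma_ne : ∀ {m : ℂ}, -1 < m.re → Gamma (m + 1) ≠ 0 := fun hm =>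
    Gamma_ne_zero_of_re_pos (by simp only [add_re, one_re]; linarith)
  induction i generalizing m with
  | zero =>
    simp only [zero_add, sum_range_one, pow_zero, one_mul, Nat.cast_zero, add_zero, Nat.sub_self,
      Nat.factorial_zero, Nat.cast_one, integral_cpow (Or.inl hm), ofReal_zero,
      zero_cpow (hm_ne hm), sub_zero, show m + 2 = m + 1 + 1 by ring, Gamma_add_one _ (hm_ne hm)]
    field_simp [hGamma_ne hm, hm_ne hm]
  | succ i ih =>
    rw [integral_sub_pow_succ_mul_cpow b c i hm, ih (hm_succ hm), sum_range_succ' _ (i + 1),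
      mul_sum, add_comm]
    congr 1
    · refine sum_congr rfl fun j _ => ?_
      rw [Nat.succ_sub_succ, Nat.factorial_succ, Gamma_add_one _ (hm_ne hm),
        show m + 1 + j + 2 = m + (j + 1 : ℕ) + 2 by push_cast; ring,
        show m + 1 + j + 1 = m + (j + 1 : ℕ) + 1 by push_cast; ring]
      field_simp [hm_ne hm]
      push_cast
      ring
    · simp only [Nat.cast_zero, add_zero, Nat.sub_zero, show m + 2 = m + 1 + 1 by ring,
        Gamma_add_one _ (hm_ne hm)]
      field_simp [hGamma_ne hm, hm_ne hm, Nat.factorial_ne_zero]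

theorem Gamma_div_Gamma_mul_descPochhammer {x y : ℂ} (k : ℕ) (hx : 0 < (x - k + 1).re)
    (hy : 0 < (y - k + 1).re) :
    Gamma (x + 1) / Gamma (y + 1) * (descPochhammer ℂ k).eval y =
      (descPochhammer ℂ k).eval x * (Gamma (x - k + 1) / Gamma (y - k + 1)) := by
  have hy' : 0 < (y + 1).re := by
    simp only [add_re, sub_re, natCast_re, one_re] at hy ⊢; linarith [k.cast_nonneg (α := ℝ)]
  have hGy := Gamma_add_one_eq_descPochhammer_mul k hy
  have hdesc : (descPochhammer ℂ k).eval y ≠ 0 := fun h => by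
    simp [h, Gamma_ne_zero_of_re_pos hy'] at hGy
  rw [Gamma_add_one_eq_descPochhammer_mul k hx, hGy]
  field_simp [Gamma_ne_zero_of_re_pos hy]

theorem integral_neg_pow_mul_iteratedDeriv_ofReal_add_cpow_div {r : ℝ} (hr : 0 < r) (i k : ℕ)
    {w : ℂ} (hw : -1 < (w - k).re) (d : ℂ) :
    ∫ s in (-r)..r, (-(s : ℂ)) ^ i * iteratedDeriv k (fun t : ℝ => ((s + t : ℝ) : ℂ) ^ w / d) r =
      (descPochhammer ℂ k).eval w / d *
        ∑ j ∈ range (i + 1), (i.factorial : ℂ) / ((i - j).factorial : ℂ) * (-(r : ℂ)) ^ (i - j) *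
          (Gamma (w - k + 1) / Gamma (w - k + j + 2)) * ((2 * r : ℝ) : ℂ) ^ (w - k + j + 1) := by
  have hintegrand : ∀ s ∈ uIoc (-r) r,
      (-(s : ℂ)) ^ i * iteratedDeriv k (fun t : ℝ => ((s + t : ℝ) : ℂ) ^ w / d) r =
        (descPochhammer ℂ k).eval w / d *
          ((r - ((s + r : ℝ) : ℂ)) ^ i * ((s + r : ℝ) : ℂ) ^ (w - k)) := by
    intro s hs
    rw [uIoc_of_le (by linarith)] at hs
    rw [iteratedDeriv_div_const, iteratedDeriv_ofReal_const_add_cpow (by linarith [hs.1])]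
    push_cast
    ring
  rw [integral_congr_ae (Filter.Eventually.of_forall hintegrand), integral_const_mul,
    integral_comp_add_right (fun u : ℝ => ((r : ℂ) - u) ^ i * (u : ℂ) ^ (w - k)),
    neg_add_cancel, ← two_mul, integral_sub_pow_mul_cpow _ _ _ hw]
  congr 1
  refine sum_congr rfl fun j _ => ?_
  push_cast
  ring_nf

theorem stmt17_general (l n i k : ℕ) (r : ℝ) (hr : 0 < r) :
    ∃ C : ℝ, ∀ A : ℂ, C < A.re →
      (∫ s in (-r)..r, (-(s : ℂ)) ^ i *
          iteratedDeriv k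
            (fun t : ℝ => (((s + t : ℝ) : ℂ)) ^ (A + l + n - i) /
              (2 : ℂ) ^ (A + 1 + (n : ℂ) - i + l - k)) r)
        = ∑ j ∈ Finset.range (i + 1),
            (2 : ℂ) ^ j * ((i.factorial : ℂ) / ((i - j).factorial : ℂ)) *
              (-(r : ℂ)) ^ (i - j) *
              iteratedDeriv k
                (fun t : ℝ =>
                  Complex.Gamma (A + l + n - i + 1) /
                    Complex.Gamma (A + l + n - i + j + 2) *
                    ((t : ℂ)) ^ (A + (l : ℂ) + n - i + j + 1)) r := by
  refine ⟨k + i, fun A hA => ?_⟩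
  set w : ℂ := A + l + n - i
  have hw : -1 < (w - k).re := by
    simp only [w, sub_re, add_re, natCast_re]
    linarith [l.cast_nonneg (α := ℝ), n.cast_nonneg (α := ℝ)]
  rw [show A + 1 + (n : ℂ) - i + l - k = w - k + 1 by ring,
    integral_neg_pow_mul_iteratedDeriv_ofReal_add_cpow_div hr i k hw, mul_sum]
  refine sum_congr rfl fun j _ => ?_
  have hGamma := Gamma_div_Gamma_mul_descPochhammer (x := w) (y := w + j + 1) k
    (by simp only [sub_re, add_re, natCast_re, one_re] at hw ⊢; linarith)
    (by simp only [sub_re, add_re, natCast_re, one_re] at hw ⊢; linarith [j.cast_nonneg (α := ℝ)])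
  -- `2 ^ (w - k + 1)` is the normalising power on the left, `2 ^ j` the one on the right.
  have hpow : ((2 * r : ℝ) : ℂ) ^ (w - k + j + 1) =
      2 ^ (w - k + 1) * 2 ^ j * (r : ℂ) ^ (w + j + 1 - k) := by
    rw [ofReal_mul, mul_cpow_ofReal_nonneg zero_le_two hr.le, ofReal_ofNat,
      show w - k + j + 1 = w - k + 1 + j by ring, cpow_add _ _ two_ne_zero, cpow_natCast,
      show w + j + 1 - k = w - k + 1 + j by ring]
  have h2 : (2 : ℂ) ^ (w - k + 1) ≠ 0 := by simp [cpow_eq_zero_iff]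
  rw [iteratedDeriv_const_mul_field, iteratedDeriv_ofReal_cpow_const hr,
    show w + j + 2 = w + j + 1 + 1 by ring, ← mul_assoc (Gamma (w + 1) / _), hGamma, hpow,
    show w + j + 1 - k + 1 = w - k + j + 2 by ring]
  field_simp

theorem stmt17 (l n i k : ℕ) (hin : i ≤ n) (r : ℝ) (hr : 0 < r) :
    ∃ C : ℝ, ∀ A : ℂ, C < A.re →
      (∫ s in (-r)..r, (-(s : ℂ)) ^ i *
          iteratedDeriv k
            (fun t : ℝ => (((s + t : ℝ) : ℂ)) ^ (A + l + n - i) /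
              (2 : ℂ) ^ (A + 1 + (n : ℂ) - i + l - k)) r)
        = ∑ j ∈ Finset.range (i + 1),
            (2 : ℂ) ^ j * ((i.factorial : ℂ) / ((i - j).factorial : ℂ)) *
              (-(r : ℂ)) ^ (i - j) *
              iteratedDeriv k
                (fun t : ℝ =>
                  Complex.Gamma (A + l + n - i + 1) /
                    Complex.Gamma (A + l + n - i + j + 2) *
                    ((t : ℂ)) ^ (A + (l : ℂ) + n - i + j + 1)) r :=
  stmt17_general l n i k r hr
end
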